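/- arXiv:1602.04145 — 13 statements merged into one kernel-verified Lean document; each statement's English description precedes it below -/
import Mathlib

section
/- Let H be a 4×4 complex Hermitian matrix, regarded as a two-qubit Hamiltonian (a matrix indexed by Fin 2 × Fin 2). If H ⊗ₖ I₂ commutes with I₂ ⊗ₖ H, then there exist a 2×2 unitary matrix U and a function d : Fin 2 × Fin 2 → ℝ such that H = (U ⊗ₖ U) * Matrix.diagonal (fun p => (d p : ℂ)) * (U ⊗ₖ U)ᴴ. -/
/-!
`H.fstBlock i i'` and `H.sndBlock k k'` are the partial matrix elements `⟨i|H|i'⟩` and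
`⟨k|H|k'⟩` taken in the first and in the second qubit. In the three-qubit picture the hypothesis
says exactly that every `fstBlock` commutes with every `sndBlock`, both acting on the middle qubit.
If all `sndBlock`s are scalar, the `fstBlock`s are multiples of a single matrix; otherwise some
`sndBlock` is not scalar, the Hermitian or anti-Hermitian part of it is a non-scalar Hermitian
matrix, and everything commuting with it is diagonal in its eigenbasis, so the `fstBlock`s again
commute with each other. Symmetrically for the `sndBlock`s, so all blocks form one commuting,
adjoint-closed family of `2 × 2` matrices, diagonalized by a single unitary `W`. Then every block
of `(W ⊗ W)ᴴ H (W ⊗ W)` in either qubit is diagonal, hence so is that matrix.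
-/

open Matrix Kronecker

namespace Matrix

variable {n R : Type*}

def fstBlock (H : Matrix (n × n) (n × n) R) (i i' : n) : Matrix n n R :=
  of fun j j' => H (i, j) (i', j')

def sndBlock (H : Matrix (n × n) (n × n) R) (k k' : n) : Matrix n n R :=
  of fun j j' => H (j, k) (j', k')

theorem conjTranspose_fstBlock [Star R] {H : Matrix (n × n) (n × n) R} (hH : H.IsHermitian)
    (i i' : n) : (H.fstBlock i i')ᴴ = H.fstBlock i' i := by
  ext j j'
  exact hH.apply (i', j) (i, j')

-- `sndBlock H` is definitionally `fstBlock (H.submatrix Prod.swap Prod.swap)`, which transfers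
-- facts about `fstBlock` to `sndBlock` (also in `commute_sndBlock_sndBlock`).
theorem conjTranspose_sndBlock [Star R] {H : Matrix (n × n) (n × n) R} (hH : H.IsHermitian)
    (k k' : n) : (H.sndBlock k k')ᴴ = H.sndBlock k' k :=
  conjTranspose_fstBlock (hH.submatrix Prod.swap) k k'

section CommRing

variable [Fintype n] [CommRing R]

theorem IsDiag.commute [DecidableEq n] {A B : Matrix n n R} (hA : A.IsDiag) (hB : B.IsDiag) :
    Commute A B := by
  rw [← hA.diagonal_diag, ← hB.diagonal_diag]
  exact commute_diagonal _ _

theorem isDiag_of_commute_diagonal [DecidableEq n] [IsDomain R] {Z : Matrix n n R} {d : n → R}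
    (hd : Function.Injective d) (h : Commute Z (diagonal d)) : Z.IsDiag := by
  intro i j hij
  have hij' := congrFun₂ h.eq i j
  simp only [mul_diagonal, diagonal_mul] at hij'
  have : Z i j * (d j - d i) = 0 := by linear_combination hij'
  exact (mul_eq_zero.mp this).resolve_right (sub_ne_zero.mpr (hd.ne (Ne.symm hij)))

theorem commute_fstBlock_sndBlock [DecidableEq n] {H : Matrix (n × n) (n × n) R}
    (hcomm : (H ⊗ₖ (1 : Matrix n n R)) *
        reindex (Equiv.prodAssoc n n n).symm (Equiv.prodAssoc n n n).symm ((1 : Matrix n n R) ⊗ₖ H) =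
      reindex (Equiv.prodAssoc n n n).symm (Equiv.prodAssoc n n n).symm ((1 : Matrix n n R) ⊗ₖ H) *
        (H ⊗ₖ (1 : Matrix n n R))) (i i' k k' : n) :
    Commute (H.fstBlock i i') (H.sndBlock k k') := by
  ext j j'
  simpa [fstBlock, sndBlock, mul_apply, Fintype.sum_prod_type, one_apply, ite_and, mul_comm] using
    congrFun₂ hcomm ((i, j), k) ((i', j'), k')

theorem commute_fstBlock_of_sndBlock_eq_smul_one [DecidableEq n] {H : Matrix (n × n) (n × n) R}
    (h : ∀ k k', ∃ c : R, H.sndBlock k k' = c • 1) (a b c d : n) :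
    Commute (H.fstBlock a b) (H.fstBlock c d) := by
  choose s hs using h
  have hfst : ∀ i i', H.fstBlock i i' = (1 : Matrix n n R) i i' • of s := by
    intro i i'
    ext k k'
    simpa [fstBlock, sndBlock, one_apply, mul_comm] using congrFun₂ (hs k k') i i'
  rw [hfst, hfst]
  exact ((Commute.refl _).smul_left _).smul_right _

variable [StarRing R]

theorem star_kronecker_mul_mul_apply_eq_sum_fstBlock (H : Matrix (n × n) (n × n) R)
    (W : Matrix n n R) (i j i' j' : n) :
    (star (W ⊗ₖ W) * H * (W ⊗ₖ W)) (i, j) (i', j') =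
      ∑ a, ∑ b, star (W a i) * W b i' * (star W * H.fstBlock a b * W) j j' := by
  simp only [mul_apply, star_apply, kroneckerMap_apply, Fintype.sum_prod_type, fstBlock, of_apply,
    star_mul', Finset.sum_mul, Finset.mul_sum]
  conv_lhs => enter [2, b]; rw [Finset.sum_comm]
  rw [Finset.sum_comm]
  congr! 4
  ring

theorem star_kronecker_mul_mul_apply_eq_sum_sndBlock (H : Matrix (n × n) (n × n) R)
    (W : Matrix n n R) (i j i' j' : n) :
    (star (W ⊗ₖ W) * H * (W ⊗ₖ W)) (i, j) (i', j') =
      ∑ c, ∑ d, star (W c j) * W d j' * (star W * H.sndBlock c d * W) i i' := by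
  simp only [mul_apply, star_apply, kroneckerMap_apply, Fintype.sum_prod_type, sndBlock, of_apply,
    star_mul', Finset.sum_mul, Finset.mul_sum]
  conv_lhs => enter [2, b, 2, d]; rw [Finset.sum_comm]
  conv_lhs => enter [2, b]; rw [Finset.sum_comm]
  rw [Finset.sum_comm]
  conv_lhs => enter [2, c]; rw [Finset.sum_comm]
  congr! 4
  ring

theorem isDiag_star_kronecker_mul_mul {H : Matrix (n × n) (n × n) R} {W : Matrix n n R}
    (hfst : ∀ i i', (star W * H.fstBlock i i' * W).IsDiag)
    (hsnd : ∀ k k', (star W * H.sndBlock k k' * W).IsDiag) :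
    (star (W ⊗ₖ W) * H * (W ⊗ₖ W)).IsDiag := by
  rintro ⟨i, j⟩ ⟨i', j'⟩ hne
  by_cases hj : j = j'
  · subst hj
    have hi : i ≠ i' := fun hi => hne (hi ▸ rfl)
    simp [star_kronecker_mul_mul_apply_eq_sum_sndBlock, hsnd _ _ hi]
  · simp [star_kronecker_mul_mul_apply_eq_sum_fstBlock, hfst _ _ hj]

end CommRing

open Complex

variable [Fintype n] [DecidableEq n]

theorem mul_star_mul_mul_star {W : Matrix n n ℂ} (hW : W ∈ unitaryGroup n ℂ) (X : Matrix n n ℂ) :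
    W * (star W * X * W) * star W = X := by
  have hWW : W * star W = 1 := Unitary.mul_star_self_of_mem hW
  rw [← mul_assoc, ← mul_assoc, hWW, one_mul, mul_assoc, hWW, mul_one]

theorem commute_conj_iff {W : Matrix n n ℂ} (hW : W ∈ unitaryGroup n ℂ) {A B : Matrix n n ℂ} :
    Commute (star W * A * W) (star W * B * W) ↔ Commute A B := by
  have hmul : ∀ X Y, star W * X * W * (star W * Y * W) = star W * (X * Y) * W := fun X Y => by
    simp only [mul_assoc]
    rw [← mul_assoc W, Unitary.mul_star_self_of_mem hW, one_mul]
  have hinj : Function.Injective fun X => star W * X * W := fun X Y hXY => by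
    simpa only [mul_star_mul_mul_star hW] using congrArg (fun Z => W * Z * star W) hXY
  simp only [commute_iff_eq, hmul]
  exact hinj.eq_iff

theorem exists_eq_mul_diagonal_mul_star_of_isDiag {H : Matrix n n ℂ} (hH : H.IsHermitian)
    {U : Matrix n n ℂ} (hU : U ∈ unitaryGroup n ℂ) (hdiag : (star U * H * U).IsDiag) :
    ∃ d : n → ℝ, H = U * diagonal (fun p => (d p : ℂ)) * star U := by
  have hD : (star U * H * U).IsHermitian := isHermitian_conjTranspose_mul_mul U hH
  have hre : (fun p => (((star U * H * U) p p).re : ℂ)) = (star U * H * U).diag :=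
    funext hD.coe_re_apply_self
  refine ⟨fun p => ((star U * H * U) p p).re, ?_⟩
  conv_lhs => rw [← mul_star_mul_mul_star hU H, ← hdiag.diagonal_diag, ← hre]

theorem exists_isHermitian_commute_of_ne_smul_one {A : Matrix n n ℂ}
    (hA : ¬∃ c : ℂ, A = c • 1) :
    ∃ P : Matrix n n ℂ, P.IsHermitian ∧ (¬∃ c : ℂ, P = c • 1) ∧
      ∀ Z, Commute Z A → Commute Z Aᴴ → Commute Z P := by
  by_cases hre : ∃ c : ℂ, A + Aᴴ = c • 1
  · refine ⟨I • (A - Aᴴ), ?_, ?_, fun Z h h' => (h.sub_right h').smul_right I⟩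
    · simp only [IsHermitian, conjTranspose_smul, conjTranspose_sub, conjTranspose_conjTranspose,
        star_def, conj_I]
      module
    · rintro ⟨c', hc'⟩
      obtain ⟨c, hc⟩ := hre
      refine hA ⟨(c - I * c') / 2, ?_⟩
      have hA' : A = (2 : ℂ)⁻¹ • ((A + Aᴴ) - I • (I • (A - Aᴴ))) := by
        rw [smul_smul, I_mul_I]
        module
      rw [hA', hc, hc']
      module
  · exact ⟨A + Aᴴ, isHermitian_add_transpose_self A, hre, fun Z h h' => h.add_right h'⟩

theorem exists_unitary_isDiag_conj_of_commute {P : Matrix (Fin 2) (Fin 2) ℂ} (hP : P.IsHermitian)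
    (hPs : ¬∃ c : ℂ, P = c • 1) :
    ∃ W ∈ unitaryGroup (Fin 2) ℂ, ∀ Z, Commute Z P → (star W * Z * W).IsDiag := by
  set W : Matrix (Fin 2) (Fin 2) ℂ := ↑hP.eigenvectorUnitary
  have hW : W ∈ unitaryGroup (Fin 2) ℂ := hP.eigenvectorUnitary.2
  set e : Fin 2 → ℂ := RCLike.ofReal ∘ hP.eigenvalues
  have hD : star W * P * W = diagonal e := by
    rw [← Unitary.conjStarAlgAut_star_apply (S := ℂ)]
    exact hP.conjStarAlgAut_star_eigenvectorUnitary
  have he : e 0 ≠ e 1 := by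
    intro he
    refine hPs ⟨e 0, ?_⟩
    have hDs : diagonal e = e 0 • 1 := by
      ext i j
      fin_cases i <;> fin_cases j <;> simp [he]
    rw [← mul_star_mul_mul_star hW P, hD, hDs, mul_smul_comm, mul_one, smul_mul_assoc,
      Unitary.mul_star_self_of_mem hW]
  have hinj : Function.Injective e := by
    intro i j
    fin_cases i <;> fin_cases j <;> simp [he, he.symm]
  refine ⟨W, hW, fun Z hZ => isDiag_of_commute_diagonal hinj ?_⟩
  rw [← hD]
  exact (commute_conj_iff hW).mpr hZ

theorem commute_of_commute_of_ne_smul_one {A : Matrix (Fin 2) (Fin 2) ℂ}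
    (hA : ¬∃ c : ℂ, A = c • 1) {Z₁ Z₂ : Matrix (Fin 2) (Fin 2) ℂ}
    (h₁ : Commute Z₁ A) (h₁' : Commute Z₁ Aᴴ) (h₂ : Commute Z₂ A) (h₂' : Commute Z₂ Aᴴ) :
    Commute Z₁ Z₂ := by
  obtain ⟨P, hP, hPs, hcommP⟩ := exists_isHermitian_commute_of_ne_smul_one hA
  obtain ⟨W, hW, hdiag⟩ := exists_unitary_isDiag_conj_of_commute hP hPs
  exact (commute_conj_iff hW).mp
    ((hdiag _ (hcommP _ h₁ h₁')).commute (hdiag _ (hcommP _ h₂ h₂')))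

theorem exists_unitary_forall_isDiag_conj {ι : Type*} (F : ι → Matrix (Fin 2) (Fin 2) ℂ)
    (hF : ∀ a, ∃ b, (F a)ᴴ = F b) (hFF : ∀ a b, Commute (F a) (F b)) :
    ∃ W ∈ unitaryGroup (Fin 2) ℂ, ∀ a, (star W * F a * W).IsDiag := by
  by_cases hs : ∀ a, ∃ c : ℂ, F a = c • 1
  · refine ⟨1, one_mem _, fun a => ?_⟩
    obtain ⟨c, hc⟩ := hs a
    simp [hc, isDiag_smul_one]
  · obtain ⟨a, ha⟩ := not_forall.mp hs
    obtain ⟨a', ha'⟩ := hF a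
    obtain ⟨P, hP, hPs, hcommP⟩ := exists_isHermitian_commute_of_ne_smul_one ha
    obtain ⟨W, hW, hdiag⟩ := exists_unitary_isDiag_conj_of_commute hP hPs
    exact ⟨W, hW, fun b => hdiag _ (hcommP _ (hFF b a) (ha' ▸ hFF b a'))⟩

section TwoQubit

variable {H : Matrix (Fin 2 × Fin 2) (Fin 2 × Fin 2) ℂ}

theorem commute_fstBlock_fstBlock (hH : H.IsHermitian)
    (hcomm : ∀ i i' k k', Commute (H.fstBlock i i') (H.sndBlock k k')) (a b c d : Fin 2) :
    Commute (H.fstBlock a b) (H.fstBlock c d) := by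
  by_cases hs : ∀ k k', ∃ c : ℂ, H.sndBlock k k' = c • 1
  · exact commute_fstBlock_of_sndBlock_eq_smul_one hs a b c d
  · simp only [not_forall] at hs
    obtain ⟨k, k', hk⟩ := hs
    refine commute_of_commute_of_ne_smul_one hk (hcomm ..) ?_ (hcomm ..) ?_ <;>
      rw [conjTranspose_sndBlock hH] <;> exact hcomm ..

theorem commute_sndBlock_sndBlock (hH : H.IsHermitian)
    (hcomm : ∀ i i' k k', Commute (H.fstBlock i i') (H.sndBlock k k')) (a b c d : Fin 2) :
    Commute (H.sndBlock a b) (H.sndBlock c d) :=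
  commute_fstBlock_fstBlock (hH.submatrix Prod.swap)
    (fun k k' i i' => (hcomm i i' k k').symm) a b c d

open Function in
theorem exists_unitary_isDiag_conj_blocks (hH : H.IsHermitian)
    (hcomm : ∀ i i' k k', Commute (H.fstBlock i i') (H.sndBlock k k')) :
    ∃ W ∈ unitaryGroup (Fin 2) ℂ, (∀ i i', (star W * H.fstBlock i i' * W).IsDiag) ∧
      ∀ k k', (star W * H.sndBlock k k' * W).IsDiag := by
  have hadj : ∀ a, ∃ b, (Sum.elim (uncurry H.fstBlock) (uncurry H.sndBlock) a)ᴴ =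
      Sum.elim (uncurry H.fstBlock) (uncurry H.sndBlock) b := by
    rintro (⟨i, i'⟩ | ⟨k, k'⟩)
    · exact ⟨.inl (i', i), conjTranspose_fstBlock hH i i'⟩
    · exact ⟨.inr (k', k), conjTranspose_sndBlock hH k k'⟩
  have hcomm' : ∀ a b, Commute (Sum.elim (uncurry H.fstBlock) (uncurry H.sndBlock) a)
      (Sum.elim (uncurry H.fstBlock) (uncurry H.sndBlock) b) := by
    rintro (⟨i, i'⟩ | ⟨k, k'⟩) (⟨j, j'⟩ | ⟨l, l'⟩)
    · exact commute_fstBlock_fstBlock hH hcomm i i' j j'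
    · exact hcomm i i' l l'
    · exact (hcomm j j' k k').symm
    · exact commute_sndBlock_sndBlock hH hcomm k k' l l'
  obtain ⟨W, hW, hdiag⟩ := exists_unitary_forall_isDiag_conj _ hadj hcomm'
  exact ⟨W, hW, fun i i' => hdiag (.inl (i, i')), fun k k' => hdiag (.inr (k, k'))⟩

end TwoQubit

end Matrix

/-- A two-qubit commuting Hermitian Hamiltonian is locally diagonalizable. -/
theorem stmt_0 (H : Matrix (Fin 2 × Fin 2) (Fin 2 × Fin 2) ℂ)
    (hHerm : H.IsHermitian)
    (hcomm :
      (H ⊗ₖ (1 : Matrix (Fin 2) (Fin 2) ℂ)) *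
        (Matrix.reindex (Equiv.prodAssoc (Fin 2) (Fin 2) (Fin 2)).symm
          (Equiv.prodAssoc (Fin 2) (Fin 2) (Fin 2)).symm
          ((1 : Matrix (Fin 2) (Fin 2) ℂ) ⊗ₖ H)) =
      (Matrix.reindex (Equiv.prodAssoc (Fin 2) (Fin 2) (Fin 2)).symm
          (Equiv.prodAssoc (Fin 2) (Fin 2) (Fin 2)).symm
          ((1 : Matrix (Fin 2) (Fin 2) ℂ) ⊗ₖ H)) *
        (H ⊗ₖ (1 : Matrix (Fin 2) (Fin 2) ℂ))) :
    ∃ (U : Matrix (Fin 2) (Fin 2) ℂ) (d : Fin 2 × Fin 2 → ℝ),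
      U ∈ Matrix.unitaryGroup (Fin 2) ℂ ∧
      H = (U ⊗ₖ U) * Matrix.diagonal (fun p => (d p : ℂ)) * (U ⊗ₖ U)ᴴ := by
  obtain ⟨W, hW, hfst, hsnd⟩ :=
    exists_unitary_isDiag_conj_blocks hHerm (commute_fstBlock_sndBlock hcomm)
  have hWW : W ⊗ₖ W ∈ unitaryGroup (Fin 2 × Fin 2) ℂ := kronecker_mem_unitary hW hW
  obtain ⟨d, hd⟩ := exists_eq_mul_diagonal_mul_star_of_isDiag hHerm hWW
    (isDiag_star_kronecker_mul_mul hfst hsnd)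
  exact ⟨W, d, hW, hd⟩
end

section
/- Let U be a 2×2 complex unitary matrix, D a 4×4 diagonal complex matrix indexed by Fin 2 × Fin 2, and set H = (U ⊗ₖ U) * D * (U ⊗ₖ U)ᴴ. Let T be the 4×4 SWAP matrix. Then H ⊗ₖ I₂ commutes with I₂ ⊗ₖ H, H ⊗ₖ I₂ commutes with I₂ ⊗ₖ (T*H*T), and H commutes with T*H*T. -/
open Matrix Kronecker

/-- The 4×4 SWAP matrix. -/
noncomputable def swapGate : Matrix (Fin 2 × Fin 2) (Fin 2 × Fin 2) ℂ :=
  Matrix.of fun p q => if p.1 = q.2 ∧ p.2 = q.1 then 1 else 0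

/-!
All the matrices involved are diagonal in one product basis. `H` is diagonal in the basis given
by the columns of `U ⊗ₖ U`, and so is `T H T`, because conjugating by SWAP only permutes the
diagonal entries and `U ⊗ₖ U` is invariant under exchanging the tensor factors. Since
`I₂ = U I₂ Uᴴ`, the three-qubit matrices `H ⊗ₖ I₂` and `I₂ ⊗ₖ H` (likewise with `T H T`) are
diagonal in the basis of `U ⊗ₖ U ⊗ₖ U`. Matrices diagonalized by a common unitary commute.
-/

namespace Matrix

theorem reindex_prodComm_kronecker {R m n : Type*} [CommMagma R] (A : Matrix m m R)
    (B : Matrix n n R) :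
    reindex (Equiv.prodComm m n) (Equiv.prodComm m n) (A ⊗ₖ B) = B ⊗ₖ A := by
  ext ⟨i, j⟩ ⟨k, l⟩
  simp [mul_comm]

variable {R m n : Type*} [Fintype m] [DecidableEq m] [Fintype n] [DecidableEq n]

def IsDiagonalizedBy [Semiring R] [Star R] (V M : Matrix n n R) : Prop :=
  ∃ a : n → R, M = V * diagonal a * Vᴴ

variable {V M N : Matrix n n R}

theorem isDiagonalizedBy_one [Semiring R] [Star R] (hV : V * Vᴴ = 1) : IsDiagonalizedBy V 1 :=
  ⟨fun _ => 1, by rw [diagonal_one, Matrix.mul_one, hV]⟩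

theorem IsDiagonalizedBy.commute [CommSemiring R] [Star R] (hV : Vᴴ * V = 1) (hM : IsDiagonalizedBy V M)
    (hN : IsDiagonalizedBy V N) : Commute M N := by
  obtain ⟨a, rfl⟩ := hM
  obtain ⟨b, rfl⟩ := hN
  have conj_mul : ∀ a b : n → R,
      V * diagonal a * Vᴴ * (V * diagonal b * Vᴴ) = V * diagonal (a * b) * Vᴴ := by
    intro a b
    calc V * diagonal a * Vᴴ * (V * diagonal b * Vᴴ)
        = V * diagonal a * (Vᴴ * V) * diagonal b * Vᴴ := by simp only [Matrix.mul_assoc]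
      _ = V * diagonal (a * b) * Vᴴ := by
        rw [hV, Matrix.mul_one, Matrix.mul_assoc V, diagonal_mul_diagonal]; rfl
  rw [Commute, SemiconjBy, conj_mul, conj_mul, mul_comm a]

theorem IsDiagonalizedBy.kronecker [CommSemiring R] [StarMul R] {W P : Matrix m m R} (hM : IsDiagonalizedBy V M)
    (hP : IsDiagonalizedBy W P) : IsDiagonalizedBy (V ⊗ₖ W) (M ⊗ₖ P) := by
  obtain ⟨a, rfl⟩ := hM
  obtain ⟨b, rfl⟩ := hP
  refine ⟨fun i => a i.1 * b i.2, ?_⟩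
  rw [mul_kronecker_mul, mul_kronecker_mul, diagonal_kronecker_diagonal, conjTranspose_kronecker]

theorem IsDiagonalizedBy.reindex [Semiring R] [Star R] (e : n ≃ m) (hM : IsDiagonalizedBy V M) :
    IsDiagonalizedBy (reindex e e V) (reindex e e M) := by
  obtain ⟨a, rfl⟩ := hM
  refine ⟨a ∘ e.symm, ?_⟩
  simp only [reindex_apply, conjTranspose_submatrix, submatrix_mul_equiv,
    ← submatrix_diagonal_equiv]

end Matrix

theorem swapGate_mul_mul_swapGate (M : Matrix (Fin 2 × Fin 2) (Fin 2 × Fin 2) ℂ) :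
    swapGate * M * swapGate =
      reindex (Equiv.prodComm (Fin 2) (Fin 2)) (Equiv.prodComm (Fin 2) (Fin 2)) M := by
  ext ⟨i, j⟩ ⟨k, l⟩
  simp [swapGate, mul_apply, Fintype.sum_prod_type, ite_and]

/-- A locally diagonalizable Hamiltonian is commuting: `H⊗I` commutes with `I⊗H`,
`H⊗I` commutes with `I⊗(THT)`, and `H` commutes with `THT`. -/
theorem stmt_2 (U : Matrix (Fin 2) (Fin 2) ℂ) (hU : U ∈ Matrix.unitaryGroup (Fin 2) ℂ)
    (d : Fin 2 × Fin 2 → ℂ)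
    (H : Matrix (Fin 2 × Fin 2) (Fin 2 × Fin 2) ℂ)
    (hH : H = (U ⊗ₖ U) * Matrix.diagonal d * (U ⊗ₖ U)ᴴ) :
    Commute (H ⊗ₖ (1 : Matrix (Fin 2) (Fin 2) ℂ))
      (Matrix.reindex (Equiv.prodAssoc (Fin 2) (Fin 2) (Fin 2)).symm
        (Equiv.prodAssoc (Fin 2) (Fin 2) (Fin 2)).symm
        ((1 : Matrix (Fin 2) (Fin 2) ℂ) ⊗ₖ H)) ∧
    Commute (H ⊗ₖ (1 : Matrix (Fin 2) (Fin 2) ℂ))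
      (Matrix.reindex (Equiv.prodAssoc (Fin 2) (Fin 2) (Fin 2)).symm
        (Equiv.prodAssoc (Fin 2) (Fin 2) (Fin 2)).symm
        ((1 : Matrix (Fin 2) (Fin 2) ℂ) ⊗ₖ (swapGate * H * swapGate))) ∧
    Commute H (swapGate * H * swapGate) := by
  have hU2 : U ⊗ₖ U ∈ unitary _ := kronecker_mem_unitary hU hU
  have hU3 : U ⊗ₖ U ⊗ₖ U ∈ unitary _ := kronecker_mem_unitary hU2 hU
  have hH : IsDiagonalizedBy (U ⊗ₖ U) H := ⟨d, hH⟩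
  have hTHT : IsDiagonalizedBy (U ⊗ₖ U) (swapGate * H * swapGate) := by
    rw [swapGate_mul_mul_swapGate, ← reindex_prodComm_kronecker U U]
    exact hH.reindex _
  have tensor_one {M} (hM : IsDiagonalizedBy (U ⊗ₖ U) M) :
      IsDiagonalizedBy (U ⊗ₖ U ⊗ₖ U) (M ⊗ₖ 1) :=
    hM.kronecker (isDiagonalizedBy_one hU.2)
  have one_tensor {M} (hM : IsDiagonalizedBy (U ⊗ₖ U) M) :
      IsDiagonalizedBy (U ⊗ₖ U ⊗ₖ U) (reindex (Equiv.prodAssoc (Fin 2) (Fin 2) (Fin 2)).symm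
        (Equiv.prodAssoc (Fin 2) (Fin 2) (Fin 2)).symm (1 ⊗ₖ M)) := by
    have hassoc := kronecker_assoc U U U
    rw [← Equiv.eq_symm_apply, reindex_symm] at hassoc
    rw [hassoc]
    exact ((isDiagonalizedBy_one hU.2).kronecker hM).reindex _
  exact ⟨(tensor_one hH).commute hU3.1 (one_tensor hH),
    (tensor_one hH).commute hU3.1 (one_tensor hTHT), hH.commute hU2.1 hTHT⟩
end

section
/- Let U be a 2×2 complex unitary matrix and a, b, c, d real numbers with a + d = b + c, and set H = (U ⊗ₖ U) * diag₄(a,b,c,d) * (U ⊗ₖ U)ᴴ. Then for every t ∈ ℝ there exist 2×2 unitary matrices V and W such that exp(i·t·H) = V ⊗ₖ W, i.e. the time evolution of H never creates entanglement. -/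
open Matrix Kronecker

/-- `diag₄ (a,b,c,d)`. -/
noncomputable def diag4 (a b c d : ℂ) : Matrix (Fin 2 × Fin 2) (Fin 2 × Fin 2) ℂ :=
  Matrix.diagonal (fun p => !![a, b; c, d] p.1 p.2)

/-!
The condition `a + d = b + c` says exactly that `diag₄(a,b,c,d)` is additively separable: its
entry at `(i, j)` is `x i + y j` with `x = (0, c - a)` and `y = (a, b)`. The exponential of such a
diagonal matrix is `diag(exp x) ⊗ diag(exp y)`, and conjugating it by `U ⊗ U` conjugates each
factor by `U`; for purely imaginary `x`, `y` both factors are unitary.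
-/

open NormedSpace

namespace Matrix

variable {m n : Type*} [Fintype m] [Fintype n]

theorem diagonal_mem_unitaryGroup [DecidableEq n] {α : Type*} [CommRing α] [StarRing α]
    {v : n → α} (hv : ∀ i, v i ∈ unitary α) : diagonal v ∈ unitaryGroup n α := by
  rw [mem_unitaryGroup_iff, star_eq_conjTranspose, diagonal_conjTranspose, diagonal_mul_diagonal,
    ← diagonal_one]
  exact congrArg diagonal (funext fun i => Unitary.mul_star_self_of_mem (hv i))

theorem conj_mem_unitaryGroup [DecidableEq n] {α : Type*} [CommRing α] [StarRing α]
    {U A : Matrix n n α} (hU : U ∈ unitaryGroup n α) (hA : A ∈ unitaryGroup n α) :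
    U * A * Uᴴ ∈ unitaryGroup n α :=
  mul_mem (mul_mem hU hA) (star_eq_conjTranspose U ▸ Unitary.star_mem hU)

theorem kronecker_conj_kronecker {R : Type*} [CommSemiring R] [StarRing R] (U A : Matrix m m R)
    (V B : Matrix n n R) :
    (U ⊗ₖ V) * (A ⊗ₖ B) * (U ⊗ₖ V)ᴴ = (U * A * Uᴴ) ⊗ₖ (V * B * Vᴴ) := by
  rw [conjTranspose_kronecker, ← mul_kronecker_mul, ← mul_kronecker_mul]

variable {𝔸 : Type*} [NormedCommRing 𝔸] [NormedAlgebra ℚ 𝔸] [CompleteSpace 𝔸]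

theorem exp_unitary_conj [DecidableEq n] [StarRing 𝔸] {U : Matrix n n 𝔸}
    (hU : U ∈ unitaryGroup n 𝔸) (A : Matrix n n 𝔸) :
    exp (U * A * Uᴴ) = U * exp A * Uᴴ := by
  have hinv : U⁻¹ = Uᴴ := inv_eq_right_inv (mem_unitaryGroup_iff.mp hU)
  rw [← hinv, exp_conj U A ⟨Unitary.toUnits ⟨U, hU⟩, rfl⟩]

theorem exp_diagonal_add [DecidableEq m] [DecidableEq n] (x : m → 𝔸) (y : n → 𝔸) :
    exp (diagonal fun p : m × n => x p.1 + y p.2) =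
      diagonal (fun i => exp (x i)) ⊗ₖ diagonal (fun j => exp (y j)) := by
  rw [exp_diagonal, diagonal_kronecker_diagonal]
  exact congrArg diagonal (funext fun p => by simp [exp_add])

end Matrix

theorem diag4_ofReal_eq_diagonal_add {a b c d : ℝ} (h : a + d = b + c) :
    diag4 a b c d = diagonal fun p => ((![0, c - a] p.1 + ![a, b] p.2 : ℝ) : ℂ) := by
  have hd : d = c - a + b := by linear_combination h
  refine congrArg diagonal (funext fun p => ?_)
  fin_cases p <;> simp [hd]

/-- If `a + d = b + c` then the time evolution of the locally diagonalizable
Hamiltonian `H = (U⊗U) diag₄(a,b,c,d) (U⊗U)ᴴ` never creates entanglement: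
`exp(itH)` is a tensor product of two unitaries. -/
theorem stmt_5 (U : Matrix (Fin 2) (Fin 2) ℂ) (hU : U ∈ Matrix.unitaryGroup (Fin 2) ℂ)
    (a b c d : ℝ) (habcd : a + d = b + c)
    (H : Matrix (Fin 2 × Fin 2) (Fin 2 × Fin 2) ℂ)
    (hH : H = (U ⊗ₖ U) * diag4 (a : ℂ) (b : ℂ) (c : ℂ) (d : ℂ) * (U ⊗ₖ U)ᴴ) :
    ∀ t : ℝ, ∃ V W : Matrix (Fin 2) (Fin 2) ℂ,
      V ∈ Matrix.unitaryGroup (Fin 2) ℂ ∧ W ∈ Matrix.unitaryGroup (Fin 2) ℂ ∧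
      NormedSpace.exp (Complex.I • (t : ℂ) • H) = V ⊗ₖ W := by
  intro t
  set x : Fin 2 → ℂ := fun i => Complex.I * (t * ![0, c - a] i : ℝ)
  set y : Fin 2 → ℂ := fun j => Complex.I * (t * ![a, b] j : ℝ)
  have hunit (r : ℝ) : exp (Complex.I * r) ∈ unitary ℂ :=
    exp_mem_unitary_of_mem_skewAdjoint (by simp [skewAdjoint.mem_iff, Complex.conj_ofReal])
  have hsep : Complex.I • (t : ℂ) • H =
      (U ⊗ₖ U) * (diagonal fun p => x p.1 + y p.2) * (U ⊗ₖ U)ᴴ := by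
    rw [hH, diag4_ofReal_eq_diagonal_add habcd, ← Matrix.smul_mul, ← Matrix.smul_mul,
      ← Matrix.mul_smul, ← Matrix.mul_smul, ← diagonal_smul, ← diagonal_smul]
    refine congrArg (fun D => (U ⊗ₖ U) * diagonal D * (U ⊗ₖ U)ᴴ) (funext fun p => ?_)
    simp only [x, y, Pi.smul_apply, smul_eq_mul]
    push_cast
    ring
  refine ⟨U * diagonal (fun i => exp (x i)) * Uᴴ, U * diagonal (fun j => exp (y j)) * Uᴴ,
    conj_mem_unitaryGroup hU (diagonal_mem_unitaryGroup fun i => hunit _),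
    conj_mem_unitaryGroup hU (diagonal_mem_unitaryGroup fun j => hunit _), ?_⟩
  rw [hsep, exp_unitary_conj (kronecker_mem_unitary hU hU), exp_diagonal_add,
    kronecker_conj_kronecker]
end

section
/- Let α, β be nonzero complex numbers with |α|² + |β|² = 1, let U = !![α, -conj(β); β, conj(α)], let a, b, c, d be real numbers with b + c ≠ a + d, and set H = (U ⊗ₖ U) * diag₄(a,b,c,d) * (U ⊗ₖ U)ᴴ. Then there exists t ∈ ℝ such that the vector exp(i·t·H).mulVec (e₀ ⊗ᵥ e₀) ∈ (Fin 2 × Fin 2 → ℂ) is entangled, i.e. it is not equal to u ⊗ᵥ w for any u, w : Fin 2 → ℂ. -/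
open Matrix Kronecker

/-- Tensor product of two one-qubit vectors. -/
def tensorVec (u w : Fin 2 → ℂ) : Fin 2 × Fin 2 → ℂ := fun p => u p.1 * w p.2

/-!
A two-qubit state is `vec X` for its coefficient matrix `X`, and a product state `u ⊗ w` has
coefficient matrix `vecMulVec w u` of rank one, hence determinant zero. A local operator `A ⊗ B`
acts by `X ↦ B * X * Aᵀ`, multiplying the determinant by `det A * det B`, and a diagonal operator
acts by a Hadamard product. Since `U ⊗ U` is unitary, `exp (i t H) = (U ⊗ U) exp (i t D) (U ⊗ U)ᴴ`,
so the evolved state has coefficient matrix `U (Φᵀ ⊙ v vᵀ) Uᵀ` with `v = Uᴴ e₀ = (ᾱ, -β)` and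
`Φ` the matrix of phases `exp (i t a), …, exp (i t d)`. Its determinant is
`(det U)² (v₀ v₁)² (exp (i t (a + d)) - exp (i t (b + c)))`, which is nonzero for
`t = π / (a + d - b - c)`.
-/

namespace Matrix

variable {m n R : Type*}

theorem diagonal_mulVec_vec [Fintype m] [Fintype n] [DecidableEq m] [DecidableEq n]
    [NonUnitalNonAssocSemiring R] (D : Matrix n m R) (X : Matrix m n R) :
    diagonal (fun p : n × m => D p.1 p.2) *ᵥ vec X = vec (Dᵀ ⊙ X) := by
  ext ⟨i, j⟩
  simp [mulVec_diagonal]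

theorem hadamard_vecMulVec [Fintype n] [DecidableEq n] [CommSemiring R] (A : Matrix n n R)
    (v w : n → R) : A ⊙ vecMulVec v w = diagonal v * A * diagonal w := by
  ext i j
  simp [vecMulVec_apply, mul_comm, mul_left_comm]

theorem det_hadamard_vecMulVec [Fintype n] [DecidableEq n] [CommRing R] (A : Matrix n n R)
    (v w : n → R) : (A ⊙ vecMulVec v w).det = (∏ i, v i) * (∏ i, w i) * A.det := by
  rw [hadamard_vecMulVec, det_mul, det_mul, det_diagonal, det_diagonal]
  ring

theorem exp_unitary_conj_s6 [Fintype m] [DecidableEq m] {𝔸 : Type*} [NormedRing 𝔸]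
    [NormedAlgebra ℚ 𝔸] [CompleteSpace 𝔸] [StarRing 𝔸] {A : Matrix m m 𝔸}
    (hA : A ∈ unitary (Matrix m m 𝔸)) (X : Matrix m m 𝔸) :
    NormedSpace.exp (A * X * Aᴴ) = A * NormedSpace.exp X * Aᴴ :=
  Matrix.exp_units_conj (Unitary.toUnits ⟨A, hA⟩) X

theorem exp_diagonal_complex [Fintype m] [DecidableEq m] (v : m → ℂ) :
    NormedSpace.exp (diagonal v) = diagonal fun i => Complex.exp (v i) := by
  rw [exp_diagonal, Pi.exp_def, Complex.exp_eq_exp_ℂ]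

end Matrix

theorem tensorVec_eq_vec (u w : Fin 2 → ℂ) : tensorVec u w = vec (vecMulVec w u) := by
  ext ⟨i, j⟩
  simp [tensorVec, vecMulVec_apply, mul_comm]

theorem kronecker_mulVec_tensorVec (A B : Matrix (Fin 2) (Fin 2) ℂ) (u w : Fin 2 → ℂ) :
    (A ⊗ₖ B) *ᵥ tensorVec u w = tensorVec (A *ᵥ u) (B *ᵥ w) := by
  rw [tensorVec_eq_vec, tensorVec_eq_vec, kronecker_mulVec_vec, mul_vecMulVec, vecMulVec_mul,
    vecMul_transpose]

theorem det_eq_zero_of_vec_eq_tensorVec {X : Matrix (Fin 2) (Fin 2) ℂ} {u w : Fin 2 → ℂ}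
    (h : vec X = tensorVec u w) : X.det = 0 := by
  rw [tensorVec_eq_vec, vec_inj] at h
  exact h ▸ det_vecMulVec w u

theorem su2_mem_unitary {α β : ℂ} (h : ‖α‖ ^ 2 + ‖β‖ ^ 2 = 1) :
    !![α, -(starRingEnd ℂ) β; β, (starRingEnd ℂ) α] ∈ unitary (Matrix (Fin 2) (Fin 2) ℂ) := by
  have h' : α * (starRingEnd ℂ) α + β * (starRingEnd ℂ) β = 1 := by
    simp only [Complex.mul_conj']
    exact_mod_cast h
  have hstar : (!![α, -(starRingEnd ℂ) β; β, (starRingEnd ℂ) α])ᴴ =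
      !![(starRingEnd ℂ) α, (starRingEnd ℂ) β; -β, α] := by
    ext i j
    fin_cases i <;> fin_cases j <;> simp
  rw [← Matrix.unitaryGroup, Matrix.mem_unitaryGroup_iff, star_eq_conjTranspose, hstar,
    mul_fin_two, one_fin_two]
  congr 1
  simp only [vecCons_inj, and_true]
  refine ⟨⟨?_, ?_⟩, ?_, ?_⟩
  · linear_combination h'
  · ring
  · ring
  · linear_combination h'

theorem Complex.exp_add_pi_mul_I_ne (z : ℂ) :
    Complex.exp (z + Real.pi * Complex.I) ≠ Complex.exp z := by
  rw [Complex.exp_antiperiodic z]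
  exact fun h => Complex.exp_ne_zero z (by linear_combination -h / 2)

theorem det_map_exp_ne_zero {a b c d t : ℝ} (ht : t * (a + d - (b + c)) = Real.pi) :
    (!![(a : ℂ), b; c, d].map fun m => Complex.exp (Complex.I * t * m)).det ≠ 0 := by
  have htc : (t : ℂ) * (a + d - (b + c)) = Real.pi := by exact_mod_cast ht
  have hphase : Complex.I * t * a + Complex.I * t * d =
      (Complex.I * t * b + Complex.I * t * c) + Real.pi * Complex.I := by
    linear_combination Complex.I * htc
  rw [det_fin_two, sub_ne_zero]
  simp only [map_apply, of_apply, cons_val', cons_val_zero, cons_val_one, empty_val',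
    cons_val_fin_one, ← Complex.exp_add]
  rw [hphase]
  exact Complex.exp_add_pi_mul_I_ne _

theorem exp_smul_conj_mulVec_tensorVec {U : Matrix (Fin 2) (Fin 2) ℂ}
    (hU : U ∈ unitary (Matrix (Fin 2) (Fin 2) ℂ)) (M : Matrix (Fin 2) (Fin 2) ℂ) (z : ℂ)
    (u w : Fin 2 → ℂ) :
    NormedSpace.exp (z • ((U ⊗ₖ U) * diagonal (fun p => M p.1 p.2) * (U ⊗ₖ U)ᴴ)) *ᵥ
        tensorVec u w =
      vec (U * ((M.map fun m => Complex.exp (z * m))ᵀ ⊙ vecMulVec (Uᴴ *ᵥ w) (Uᴴ *ᵥ u)) * Uᵀ) := by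
  rw [← Matrix.smul_mul, ← Matrix.mul_smul, ← diagonal_smul,
    exp_unitary_conj_s6 (kronecker_mem_unitary hU hU), exp_diagonal_complex, ← mulVec_mulVec,
    ← mulVec_mulVec, conjTranspose_kronecker, kronecker_mulVec_tensorVec, tensorVec_eq_vec]
  rw [← kronecker_mulVec_vec, ← diagonal_mulVec_vec]
  rfl

/-- If `b + c ≠ a + d` (and `α, β ≠ 0`), then the Hamiltonian
`H = (U⊗U) diag₄(a,b,c,d) (U⊗U)ᴴ` creates entanglement from the basis state `|00⟩`
at some time `t`. -/
theorem stmt_6 (α β : ℂ) (hα : α ≠ 0) (hβ : β ≠ 0)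
    (hnorm : ‖α‖ ^ 2 + ‖β‖ ^ 2 = 1)
    (U : Matrix (Fin 2) (Fin 2) ℂ)
    (hU : U = !![α, -(starRingEnd ℂ) β; β, (starRingEnd ℂ) α])
    (a b c d : ℝ) (habcd : b + c ≠ a + d)
    (H : Matrix (Fin 2 × Fin 2) (Fin 2 × Fin 2) ℂ)
    (hH : H = (U ⊗ₖ U) * diag4 (a : ℂ) (b : ℂ) (c : ℂ) (d : ℂ) * (U ⊗ₖ U)ᴴ) :
    ∃ t : ℝ, ¬∃ u w : Fin 2 → ℂ,
      (NormedSpace.exp (Complex.I • (t : ℂ) • H)).mulVec (tensorVec ![1, 0] ![1, 0]) =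
        tensorVec u w := by
  have hUu : U ∈ unitary (Matrix (Fin 2) (Fin 2) ℂ) := hU ▸ su2_mem_unitary hnorm
  have hUdet : U.det ≠ 0 :=
    ((isUnit_iff_isUnit_det U).mp (Unitary.isUnit_coe (U := ⟨U, hUu⟩))).ne_zero
  have hv : ∏ i, (Uᴴ *ᵥ ![1, 0]) i ≠ 0 := by
    simp [hU, Fin.prod_univ_two, mulVec, dotProduct, hα, hβ]
  refine ⟨Real.pi / (a + d - (b + c)), ?_⟩
  rintro ⟨u, w, hprod⟩
  rw [hH, diag4, smul_smul, exp_smul_conj_mulVec_tensorVec hUu] at hprod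
  have hdet := det_eq_zero_of_vec_eq_tensorVec hprod
  rw [det_mul, det_mul, det_transpose, det_hadamard_vecMulVec, det_transpose] at hdet
  simp only [mul_eq_zero, hUdet, hv, or_self, false_or, or_false] at hdet
  exact det_map_exp_ne_zero (div_mul_cancel₀ _ (sub_ne_zero.mpr habcd.symm)) hdet
end

section
/- Let α, β ∈ ℂ and a', d', t ∈ ℝ, let D(t) = diag₄(exp(i·a'·t), exp(i·t), exp(i·t), exp(i·d'·t)), and let χ : Fin 2 → ℂ be the vector (α, β). For every ψ : Fin 2 → ℂ, the vector φ : Fin 2 → ℂ defined by φ(j) = Σ_{i : Fin 2} conj(χ(i)) · (D(t).mulVec (ψ ⊗ᵥ χ))(i,j) satisfies φ = L̃(t).mulVec ψ, where L̃(t) = !![|α|²·exp(i·a'·t), α·conj(β)·exp(i·t); conj(α)·β·exp(i·t), |β|²·exp(i·d'·t)]. Moreover det L̃(t) = |α|²·|β|²·(exp(i·(a'+d')·t) − exp(2·i·t)). -/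
open Matrix ComplexConjugate

theorem postselect_diag4_mulVec_tensorVec (a b c d : ℂ) (ψ χ : Fin 2 → ℂ) :
    (fun j : Fin 2 => ∑ i : Fin 2, conj (χ i) * (diag4 a b c d *ᵥ tensorVec ψ χ) (i, j)) =
      !![conj (χ 0) * χ 0 * a, conj (χ 1) * χ 0 * c;
        conj (χ 0) * χ 1 * b, conj (χ 1) * χ 1 * d] *ᵥ ψ := by
  funext j
  simp_rw [diag4, mulVec_diagonal]
  fin_cases j <;> simp [tensorVec, Fin.sum_univ_two, mulVec, dotProduct] <;> ring

theorem det_postselect_gadget (α β u v w : ℂ) :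
    !![((‖α‖ : ℝ) : ℂ) ^ 2 * u, α * conj β * v; conj α * β * v, ((‖β‖ : ℝ) : ℂ) ^ 2 * w].det =
      ((‖α‖ : ℝ) : ℂ) ^ 2 * ((‖β‖ : ℝ) : ℂ) ^ 2 * (u * w - v ^ 2) := by
  rw [det_fin_two_of]
  -- the off-diagonal product `α β̄ · ᾱ β` is `|α|² |β|²`, the product of the diagonal weights
  have h := congrArg₂ (· * ·) (Complex.conj_mul' α) (Complex.mul_conj' β)
  linear_combination (-v ^ 2) * h

/-- The postselection gadget `L(t)`: tensoring with the ancilla `χ = U|0⟩ = (α,β)`,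
applying `D(t)`, and postselecting the first qubit onto `χ` implements the matrix
`L̃(t)`, whose determinant is `|α|²|β|²(exp(i(a'+d')t) − exp(2it))`. -/
theorem stmt_7 (α β : ℂ) (a' d' t : ℝ)
    (D : Matrix (Fin 2 × Fin 2) (Fin 2 × Fin 2) ℂ)
    (hD : D = diag4 (Complex.exp (Complex.I * (a' : ℂ) * (t : ℂ)))
      (Complex.exp (Complex.I * (t : ℂ))) (Complex.exp (Complex.I * (t : ℂ)))
      (Complex.exp (Complex.I * (d' : ℂ) * (t : ℂ))))
    (χ : Fin 2 → ℂ) (hχ : χ = ![α, β])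
    (L : Matrix (Fin 2) (Fin 2) ℂ)
    (hL : L = !![((‖α‖ : ℝ) : ℂ) ^ 2 * Complex.exp (Complex.I * (a' : ℂ) * (t : ℂ)),
        α * (starRingEnd ℂ) β * Complex.exp (Complex.I * (t : ℂ));
        (starRingEnd ℂ) α * β * Complex.exp (Complex.I * (t : ℂ)),
        ((‖β‖ : ℝ) : ℂ) ^ 2 * Complex.exp (Complex.I * (d' : ℂ) * (t : ℂ))]) :
    (∀ ψ : Fin 2 → ℂ,
      (fun j : Fin 2 =>
          ∑ i : Fin 2, (starRingEnd ℂ) (χ i) * D.mulVec (tensorVec ψ χ) (i, j)) =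
        L.mulVec ψ) ∧
    L.det = ((‖α‖ : ℝ) : ℂ) ^ 2 * ((‖β‖ : ℝ) : ℂ) ^ 2 *
      (Complex.exp (Complex.I * ((a' : ℂ) + (d' : ℂ)) * (t : ℂ)) -
        Complex.exp (2 * Complex.I * (t : ℂ))) := by
  subst hD hχ hL
  refine ⟨fun ψ => ?_, ?_⟩
  · rw [postselect_diag4_mulVec_tensorVec]
    simp only [cons_val_zero, cons_val_one, Complex.conj_mul']
    congr 1
    ext i j
    fin_cases i <;> fin_cases j <;> simp [mul_comm]
  · rw [det_postselect_gadget, ← Complex.exp_add, ← Complex.exp_nat_mul]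
    congr 3 <;> push_cast <;> ring
end

section
/- Let α, β ∈ ℂ and a', d', t ∈ ℝ, let D(t) = diag₄(exp(i·a'·t), exp(i·t), exp(i·t), exp(i·d'·t)), and let χ : Fin 2 → ℂ be the vector (−conj(β), conj(α)). For every ψ : Fin 2 → ℂ, the vector φ : Fin 2 → ℂ defined by φ(j) = Σ_{i : Fin 2} conj(χ(i)) · (D(t).mulVec (ψ ⊗ᵥ χ))(i,j) satisfies φ = M̃(t).mulVec ψ, where M̃(t) = !![|β|²·exp(i·a'·t), −α·conj(β)·exp(i·t); −conj(α)·β·exp(i·t), |α|²·exp(i·d'·t)]. -/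
open Matrix

theorem sum_conj_mul_diagonal_mulVec_tensorVec (d : Fin 2 × Fin 2 → ℂ) (ψ χ : Fin 2 → ℂ) :
    (fun j : Fin 2 => ∑ i : Fin 2, starRingEnd ℂ (χ i) * (diagonal d *ᵥ tensorVec ψ χ) (i, j)) =
      Matrix.of (fun j i => χ j * starRingEnd ℂ (χ i) * d (i, j)) *ᵥ ψ := by
  funext j
  simp only [mulVec_diagonal]
  simp only [tensorVec, mulVec, dotProduct, of_apply]
  exact Finset.sum_congr rfl fun i _ => by ring

/-- The postselection gadget `M(t)`: tensoring with the ancilla `χ = U|1⟩ = (−conj β, conj α)`,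
applying `D(t)`, and postselecting the first qubit onto `χ` implements the matrix `M̃(t)`. -/
theorem stmt_8 (α β : ℂ) (a' d' t : ℝ)
    (D : Matrix (Fin 2 × Fin 2) (Fin 2 × Fin 2) ℂ)
    (hD : D = diag4 (Complex.exp (Complex.I * (a' : ℂ) * (t : ℂ)))
      (Complex.exp (Complex.I * (t : ℂ))) (Complex.exp (Complex.I * (t : ℂ)))
      (Complex.exp (Complex.I * (d' : ℂ) * (t : ℂ))))
    (χ : Fin 2 → ℂ) (hχ : χ = ![-(starRingEnd ℂ) β, (starRingEnd ℂ) α])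
    (M : Matrix (Fin 2) (Fin 2) ℂ)
    (hM : M = !![((‖β‖ : ℝ) : ℂ) ^ 2 * Complex.exp (Complex.I * (a' : ℂ) * (t : ℂ)),
        -(α * (starRingEnd ℂ) β * Complex.exp (Complex.I * (t : ℂ)));
        -((starRingEnd ℂ) α * β * Complex.exp (Complex.I * (t : ℂ))),
        ((‖α‖ : ℝ) : ℂ) ^ 2 * Complex.exp (Complex.I * (d' : ℂ) * (t : ℂ))]) :
    ∀ ψ : Fin 2 → ℂ,
      (fun j : Fin 2 =>
          ∑ i : Fin 2, (starRingEnd ℂ) (χ i) * D.mulVec (tensorVec ψ χ) (i, j)) =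
        M.mulVec ψ := by
  intro ψ
  subst hD hχ hM
  rw [diag4, sum_conj_mul_diagonal_mulVec_tensorVec]
  congr 1
  ext j i
  fin_cases j <;> fin_cases i <;> simp [← Complex.conj_mul', mul_comm]
end

section
/- Let α, β ∈ ℂ and a', d', t₁, t₂ ∈ ℝ, and write T = t₁ + t₂. Define the 2×2 complex matrices L̃ = !![|α|²·exp(i·a'·T), α·conj(β)·exp(i·t₂); conj(α)·β·exp(i·t₁), |β|²·exp(i·d'·T)], M̃ = !![|β|²·exp(i·a'·T), −α·conj(β)·exp(i·t₂); −conj(α)·β·exp(i·t₁), |α|²·exp(i·d'·T)], and N = !![exp(i·(d'−a')·T/2), 0; 0, exp(−i·(d'−a')·T/2)]. Then N * M̃ * N * L̃ = |α|²·|β|²·(exp(i·(a'+d')·T) − exp(i·T)) • I₂, i.e. the phase-corrected gadget N·M̃·N is, up to the scalar det L̃, the inverse of the gadget L̃. -/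
/-!
`L̃` has the shape `!![p A, b; c, q D]` with `p = |α|²`, `q = |β|²`, and `M̃ = !![q A, -b; -c, p D]`.
Conjugating by `N = diag(u, u⁻¹)` with `u² A = D` swaps the phases `A` and `D` on the diagonal, so
`N M̃ N` is exactly the adjugate of `L̃`, and `adj L̃ * L̃ = det L̃ • 1`. Since `b c = p q e^{iT}`,
`det L̃ = p q (A D - e^{iT})`.
-/

open Matrix

lemma diagonal_fin_two_mul_mul_diagonal_fin_two {R : Type*} [CommRing R] (u v a b c d : R) :
    !![u, 0; 0, v] * !![a, b; c, d] * !![u, 0; 0, v] =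
      !![u * u * a, u * v * b; v * u * c, v * v * d] := by
  ext i j
  fin_cases i <;> fin_cases j <;> simp [Matrix.mul_apply, Fin.sum_univ_two] <;> ring

lemma diagonal_fin_two_conj_eq_adjugate {R : Type*} [CommRing R] (u v p q A D b c : R)
    (huv : u * v = 1) (hAD : u * u * A = D) :
    !![u, 0; 0, v] * !![q * A, -b; -c, p * D] * !![u, 0; 0, v] =
      adjugate !![p * A, b; c, q * D] := by
  have hDA : v * v * D = A := by linear_combination (-(v * v)) * hAD + (A * (u * v + 1)) * huv
  have hq : u * u * (q * A) = q * D := by rw [← hAD]; ring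
  have hp : v * v * (p * D) = p * A := by rw [← hDA]; ring
  rw [diagonal_fin_two_mul_mul_diagonal_fin_two, adjugate_fin_two_of, mul_comm v u, huv, hq, hp,
    one_mul, one_mul]

open ComplexConjugate in
lemma det_fin_two_gadget (α β A D E₁ E₂ : ℂ) :
    det !![((‖α‖ : ℝ) : ℂ) ^ 2 * A, α * conj β * E₂; conj α * β * E₁, ((‖β‖ : ℝ) : ℂ) ^ 2 * D] =
      ((‖α‖ : ℝ) : ℂ) ^ 2 * ((‖β‖ : ℝ) : ℂ) ^ 2 * (A * D - E₂ * E₁) := by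
  rw [det_fin_two_of, ← Complex.mul_conj', ← Complex.mul_conj']
  ring

/-- The phase-corrected gadget `N·M̃·N` is, up to the scalar `det L̃`, the inverse
of the gadget `L̃`. -/
theorem stmt_10 (α β : ℂ) (a' d' t₁ t₂ : ℝ) (T : ℝ) (hT : T = t₁ + t₂)
    (L M N : Matrix (Fin 2) (Fin 2) ℂ)
    (hL : L = !![((‖α‖ : ℝ) : ℂ) ^ 2 * Complex.exp (Complex.I * (a' : ℂ) * (T : ℂ)),
        α * (starRingEnd ℂ) β * Complex.exp (Complex.I * (t₂ : ℂ));
        (starRingEnd ℂ) α * β * Complex.exp (Complex.I * (t₁ : ℂ)),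
        ((‖β‖ : ℝ) : ℂ) ^ 2 * Complex.exp (Complex.I * (d' : ℂ) * (T : ℂ))])
    (hM : M = !![((‖β‖ : ℝ) : ℂ) ^ 2 * Complex.exp (Complex.I * (a' : ℂ) * (T : ℂ)),
        -(α * (starRingEnd ℂ) β * Complex.exp (Complex.I * (t₂ : ℂ)));
        -((starRingEnd ℂ) α * β * Complex.exp (Complex.I * (t₁ : ℂ))),
        ((‖α‖ : ℝ) : ℂ) ^ 2 * Complex.exp (Complex.I * (d' : ℂ) * (T : ℂ))])
    (hN : N = !![Complex.exp (Complex.I * ((d' : ℂ) - (a' : ℂ)) * (T : ℂ) / 2), 0;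
        0, Complex.exp (-(Complex.I * ((d' : ℂ) - (a' : ℂ)) * (T : ℂ) / 2))]) :
    N * M * N * L =
      (((‖α‖ : ℝ) : ℂ) ^ 2 * ((‖β‖ : ℝ) : ℂ) ^ 2 *
        (Complex.exp (Complex.I * ((a' : ℂ) + (d' : ℂ)) * (T : ℂ)) -
          Complex.exp (Complex.I * (T : ℂ)))) • (1 : Matrix (Fin 2) (Fin 2) ℂ) := by
  open Complex in
  have hphase : exp (I * (d' - a') * T / 2) * exp (I * (d' - a') * T / 2) * exp (I * a' * T) =
      exp (I * d' * T) := by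
    rw [← exp_add, ← exp_add]; ring_nf
  have hsum : exp (I * (a' + d') * T) = exp (I * a' * T) * exp (I * d' * T) := by
    rw [← exp_add]; ring_nf
  have hT' : exp (I * T) = exp (I * t₂) * exp (I * t₁) := by
    rw [← exp_add, hT]; push_cast; ring_nf
  have hinv : exp (I * (d' - a') * T / 2) * exp (-(I * (d' - a') * T / 2)) = 1 := by
    rw [← exp_add, add_neg_cancel, exp_zero]
  rw [hN, hM, hL, diagonal_fin_two_conj_eq_adjugate _ _ _ _ _ _ _ _ hinv hphase, adjugate_mul,
    det_fin_two_gadget, hsum, hT']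
end

section
/- Let a' ∈ ℝ, set d' = −2 − a', and define r : ℝ → ℂ by r(t) = (exp(i·t) − exp(i·a'·t)) / (exp(i·d'·t) − exp(i·t)). For every s ∈ ℝ such that exp(i·d'·s) ≠ exp(i·s) and exp(−i·d'·s) ≠ exp(−i·s), one has r(s) · r(−s) = (1 − Real.cos((1 − a')·s)) / (1 − Real.cos((3 + a')·s)); in particular r(s)·r(−s) is a nonnegative real number. -/
/-! Numerator and denominator of `r(s) · r(-s)` are products of the form
`(e^{ix} - e^{iy}) (e^{-ix} - e^{-iy}) = 2 (1 - cos (x - y))`, so the factors `2` cancel and both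
remaining terms `1 - cos _` are nonnegative. -/

open Complex

theorem exp_sub_exp_mul_exp_neg_sub_exp (x y : ℂ) :
    (exp (I * x) - exp (I * y)) * (exp (-(I * x)) - exp (-(I * y))) =
      2 * (1 - cos (x - y)) := by
  have hx : exp (I * x) * exp (-(I * x)) = 1 := by rw [← exp_add, add_neg_cancel, exp_zero]
  have hy : exp (I * y) * exp (-(I * y)) = 1 := by rw [← exp_add, add_neg_cancel, exp_zero]
  have hcos : 2 * cos (x - y) = exp (I * x) * exp (-(I * y)) + exp (I * y) * exp (-(I * x)) := by
    rw [two_cos, ← exp_add, ← exp_add]; ring_nf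
  linear_combination hx + hy + hcos

theorem stmt_11_general (a' d' : ℝ) (hd' : d' = -2 - a')
    (r : ℝ → ℂ)
    (hr : ∀ t : ℝ, r t =
      (Complex.exp (Complex.I * (t : ℂ)) - Complex.exp (Complex.I * (a' : ℂ) * (t : ℂ))) /
      (Complex.exp (Complex.I * (d' : ℂ) * (t : ℂ)) - Complex.exp (Complex.I * (t : ℂ))))
    (s : ℝ) :
    r s * r (-s) =
      (((1 - Real.cos ((1 - a') * s)) / (1 - Real.cos ((3 + a') * s)) : ℝ) : ℂ) ∧
    0 ≤ (1 - Real.cos ((1 - a') * s)) / (1 - Real.cos ((3 + a') * s)) := by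
  refine ⟨?_, div_nonneg (sub_nonneg.2 (Real.cos_le_one _)) (sub_nonneg.2 (Real.cos_le_one _))⟩
  rw [hr, hr, div_mul_div_comm]
  simp only [ofReal_neg, mul_neg, mul_assoc]
  rw [exp_sub_exp_mul_exp_neg_sub_exp, exp_sub_exp_mul_exp_neg_sub_exp,
    mul_div_mul_left _ _ two_ne_zero, hd']
  have hden : ((-2 - a' : ℝ) : ℂ) * s - s = -((3 + a') * s) := by push_cast; ring
  rw [hden, cos_neg]
  push_cast
  rw [sub_mul, one_mul]

/-- The product `r(s)·r(−s)` of gadget ratios equals a nonnegative real number,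
namely `(1 − cos((1−a')s))/(1 − cos((3+a')s))`. -/
theorem stmt_11 (a' d' : ℝ) (hd' : d' = -2 - a')
    (r : ℝ → ℂ)
    (hr : ∀ t : ℝ, r t =
      (Complex.exp (Complex.I * (t : ℂ)) - Complex.exp (Complex.I * (a' : ℂ) * (t : ℂ))) /
      (Complex.exp (Complex.I * (d' : ℂ) * (t : ℂ)) - Complex.exp (Complex.I * (t : ℂ))))
    (s : ℝ)
    (h1 : Complex.exp (Complex.I * (d' : ℂ) * (s : ℂ)) ≠ Complex.exp (Complex.I * (s : ℂ)))
    (h2 : Complex.exp (-(Complex.I * (d' : ℂ) * (s : ℂ))) ≠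
      Complex.exp (-(Complex.I * (s : ℂ)))) :
    r s * r (-s) =
      (((1 - Real.cos ((1 - a') * s)) / (1 - Real.cos ((3 + a') * s)) : ℝ) : ℂ) ∧
    0 ≤ (1 - Real.cos ((1 - a') * s)) / (1 - Real.cos ((3 + a') * s)) :=
  stmt_11_general a' d' hd' r hr s
end

section
/- Let a' ∈ ℝ with a' ∉ {1, −1, −3}, set d' = −2 − a', and define r : ℝ → ℂ by r(t) = (exp(i·t) − exp(i·a'·t)) / (exp(i·d'·t) − exp(i·t)). Then for every θ ∈ (0, 2π) there exist k ∈ ℕ with k ≥ 1, times t : Fin k → ℝ with exp(i·d'·t(j)) ≠ exp(i·t(j)) for every j, and a real number c > 0, such that ∏_{j} r(t(j)) = c · exp(i·θ). -/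
open Real Filter Topology

/-!
Both numerator and denominator of `r t` are half-angle products,
`e^{ix} - e^{iy} = 2i sin((x - y)/2) e^{i(x + y)/2}`, so `r t = ρ t · e^{i(1 + a')t}` with the real
factor `ρ t = -sin((1 - a')t/2) / sin((3 + a')t/2)`. The excluded values of `a'` are exactly those
making `ρ` vanish identically or the phase rate `1 + a'` zero. For small `t ≠ 0` the factor `ρ t` is
nonzero, so `2n` equal times `t = θ / (2n(1 + a'))`, with `n` large, give `ρ t ^ (2n) · e^{iθ}`.
-/

namespace Complex

theorem exp_I_mul_sub_exp_I_mul (x y : ℂ) :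
    exp (I * x) - exp (I * y) = 2 * I * sin ((x - y) / 2) * exp (I * ((x + y) / 2)) := by
  have hx : I * x = I * ((x + y) / 2) + I * ((x - y) / 2) := by ring
  have hy : I * y = I * ((x + y) / 2) - I * ((x - y) / 2) := by ring
  rw [hx, hy, exp_add, exp_sub, sin, show -((x - y) / 2) * I = -(I * ((x - y) / 2)) by ring,
    show (x - y) / 2 * I = I * ((x - y) / 2) by ring, exp_neg]
  generalize exp (I * ((x + y) / 2)) = E
  have hF := exp_ne_zero (I * ((x - y) / 2))
  generalize exp (I * ((x - y) / 2)) = F at hF ⊢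
  field_simp
  linear_combination E * (F ^ 2 - 1) * I_sq

end Complex

open Complex in
/-- Also for `sin ((3 + a') / 2 * t) = 0`: both sides are then `0`, by `x / 0 = 0`. -/
theorem gadget_ratio_eq (a' t : ℝ) :
    (exp (I * t) - exp (I * a' * t)) / (exp (I * (-2 - a' : ℝ) * t) - exp (I * t)) =
      ((-(Real.sin ((1 - a') / 2 * t) / Real.sin ((3 + a') / 2 * t)) : ℝ) : ℂ) *
        exp (I * ((1 + a') * t : ℝ)) := by
  simp only [mul_assoc I, exp_I_mul_sub_exp_I_mul, mul_assoc (2 * I)]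
  rw [mul_div_mul_left _ _ (mul_ne_zero two_ne_zero I_ne_zero), mul_div_mul_comm,
    ← Complex.exp_sub]
  congr 1
  · push_cast
    rw [show ((-2 - a') * t - t) / 2 = -((3 + a') / 2 * t : ℂ) by ring, Complex.sin_neg, div_neg]
    ring_nf
  · push_cast; ring_nf

theorem eventually_sin_mul_ne_zero {b : ℝ} (hb : b ≠ 0) :
    ∀ᶠ t in 𝓝[≠] (0 : ℝ), Real.sin (b * t) ≠ 0 := by
  have hsmall : ∀ᶠ t in 𝓝 (0 : ℝ), b * t ∈ Set.Ioo (-π) π :=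
    ((continuous_const_mul b).tendsto' 0 0 (mul_zero b)).eventually
      (Ioo_mem_nhds (by linarith [pi_pos]) pi_pos)
  filter_upwards [nhdsWithin_le_nhds hsmall, self_mem_nhdsWithin] with t ht ht0
  rw [Ne, sin_eq_zero_iff_of_lt_of_lt ht.1 ht.2]
  exact mul_ne_zero hb ht0

/-- Products of the gadget ratios `r(t)` can realize any prescribed relative
phase `θ ∈ (0, 2π)`, up to a positive real scalar. -/
theorem stmt_13 (a' d' : ℝ) (ha1 : a' ≠ 1) (ha2 : a' ≠ -1) (ha3 : a' ≠ -3)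
    (hd' : d' = -2 - a')
    (r : ℝ → ℂ)
    (hr : ∀ t : ℝ, r t =
      (Complex.exp (Complex.I * (t : ℂ)) - Complex.exp (Complex.I * (a' : ℂ) * (t : ℂ))) /
      (Complex.exp (Complex.I * (d' : ℂ) * (t : ℂ)) - Complex.exp (Complex.I * (t : ℂ)))) :
    ∀ θ ∈ Set.Ioo (0 : ℝ) (2 * π),
      ∃ (k : ℕ) (_ : 1 ≤ k) (t : Fin k → ℝ),
        (∀ j : Fin k, Complex.exp (Complex.I * (d' : ℂ) * (t j : ℂ)) ≠
          Complex.exp (Complex.I * (t j : ℂ))) ∧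
        ∃ c : ℝ, 0 < c ∧
          (∏ j : Fin k, r (t j)) = (c : ℂ) * Complex.exp (Complex.I * (θ : ℂ)) := by
  rintro θ ⟨hθ, -⟩
  subst hd'
  have hα : 1 + a' ≠ 0 := fun h => ha2 (by linarith)
  have hb : (1 - a') / 2 ≠ 0 := fun h => ha1 (by linarith)
  have hc : (3 + a') / 2 ≠ 0 := fun h => ha3 (by linarith)
  have htimes : Tendsto (fun n : ℕ => θ / (2 * (1 + a')) / n) atTop (𝓝[≠] 0) :=
    tendsto_nhdsWithin_iff.mpr ⟨tendsto_const_div_atTop_nhds_zero_nat _,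
      (eventually_gt_atTop 0).mono fun n hn =>
        div_ne_zero (div_ne_zero hθ.ne' (mul_ne_zero two_ne_zero hα)) (Nat.cast_ne_zero.mpr hn.ne')⟩
  obtain ⟨n, ⟨hsb, hsc⟩, hn⟩ := ((htimes.eventually ((eventually_sin_mul_ne_zero hb).and
    (eventually_sin_mul_ne_zero hc))).and (eventually_gt_atTop 0)).exists
  set t := θ / (2 * (1 + a')) / n
  set ρ := -(Real.sin ((1 - a') / 2 * t) / Real.sin ((3 + a') / 2 * t))
  have hρ : ρ ≠ 0 := neg_ne_zero.mpr (div_ne_zero hsb hsc)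
  have hrt : r t = ρ * Complex.exp (Complex.I * ((1 + a') * t : ℝ)) :=
    (hr t).trans (gadget_ratio_eq a' t)
  have hden : Complex.exp (Complex.I * (-2 - a' : ℝ) * t) ≠ Complex.exp (Complex.I * t) := by
    intro h
    have : r t = 0 := by rw [hr, h, sub_self, div_zero]
    exact mul_ne_zero (Complex.ofReal_ne_zero.mpr hρ) (Complex.exp_ne_zero _) (hrt ▸ this)
  refine ⟨2 * n, by omega, fun _ => t, fun _ => hden, ρ ^ (2 * n),
    Even.pow_pos (even_two_mul n) hρ, ?_⟩
  rw [Finset.prod_const, Finset.card_fin, hrt, mul_pow, ← Complex.exp_nat_mul,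
    Complex.ofReal_pow]
  have hphase : (2 * n : ℝ) * ((1 + a') * t) = θ := by
    have : (n : ℝ) ≠ 0 := Nat.cast_ne_zero.mpr hn.ne'
    simp only [t]
    field_simp
  rw [← hphase]
  push_cast
  ring_nf
end

section
/- Let a' ∈ ℝ with a' ∉ {1, −1, −3}. Then for every real c > 0 there exist k ∈ ℕ and times s : Fin k → ℝ such that Real.cos((3 + a')·s(j)) ≠ 1 for every j and ∏_{j} (1 − Real.cos((1 − a')·s(j))) / (1 − Real.cos((3 + a')·s(j))) = c. -/
/-!
The common factor `g(s) = (1 - cos (α s)) / (1 - cos (β s))`, with `α = |1 - a'|` and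
`β = |3 + a'|` positive and distinct, is continuous on `(0, 2π/β)`, so its values there form an
interval. That interval contains a value below `1` and a value above `1`: if `β < α`, then
`g(2π/α) = 0` and `g(π/α) = 2 / (1 - cos (βπ/α)) > 1`; if `α < β`, then
`g(π/β) = (1 - cos (απ/β)) / 2 < 1` and `g → ∞` at `2π/β`. Since `c ^ (1/k) → 1`, for large `k`
the root `c ^ (1/k)` is a value `g(s)`, and `k` equal times `s` give the product `c`.
-/

open Real Filter Set Topology

lemma one_sub_cos_pos_of_pos_of_lt_two_pi {x : ℝ} (h0 : 0 < x) (h2 : x < 2 * π) :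
    0 < 1 - cos x := by
  have hne : cos x ≠ 1 := fun h =>
    h0.ne' ((cos_eq_one_iff_of_lt_of_lt (by linarith) h2).mp h)
  linarith [(cos_le_one x).lt_of_ne hne]

lemma neg_one_lt_cos_of_nonneg_of_lt_pi {x : ℝ} (h0 : 0 ≤ x) (hπ : x < π) : -1 < cos x := by
  simpa using cos_lt_cos_of_nonneg_of_le_pi h0 le_rfl hπ

lemma exists_pow_eq_of_ordConnected {S : Set ℝ} (hS : S.OrdConnected) {p q : ℝ} (hp : p ∈ S)
    (hq : q ∈ S) (hp1 : p < 1) (hq1 : 1 < q) {c : ℝ} (hc : 0 < c) :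
    ∃ k : ℕ, ∃ x ∈ S, x ^ k = c := by
  have hroot : Tendsto (fun k : ℕ => c ^ ((k : ℝ)⁻¹)) atTop (𝓝 1) := by
    simpa [Function.comp_def] using ((continuous_const_rpow hc.ne').tendsto 0).comp
      (tendsto_inv_atTop_zero.comp tendsto_natCast_atTop_atTop)
  obtain ⟨k, hk, hk0⟩ :=
    ((hroot.eventually (Ioo_mem_nhds hp1 hq1)).and (eventually_ne_atTop 0)).exists
  exact ⟨k, _, hS.out hp hq (Ioo_subset_Icc_self hk), rpow_inv_natCast_pow hc.le hk0⟩

/-- The paper's `r(s) r(-s)` is `gadgetRatio (1 - a') (3 + a') s`. -/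
noncomputable def gadgetRatio (α β s : ℝ) : ℝ :=
  (1 - cos (α * s)) / (1 - cos (β * s))

lemma gadgetRatio_abs_abs (α β : ℝ) {s : ℝ} (hs : 0 ≤ s) :
    gadgetRatio |α| |β| s = gadgetRatio α β s := by
  rw [gadgetRatio, gadgetRatio, ← cos_abs (α * s), ← cos_abs (β * s), abs_mul, abs_mul,
    abs_of_nonneg hs]

section Positive

variable {α β : ℝ}

lemma one_sub_cos_mul_pos (hβ : 0 < β) {s : ℝ} (hs : s ∈ Ioo 0 (2 * π / β)) :
    0 < 1 - cos (β * s) := by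
  refine one_sub_cos_pos_of_pos_of_lt_two_pi (mul_pos hβ hs.1) ?_
  rw [← lt_div_iff₀' hβ]
  exact hs.2

lemma continuousOn_gadgetRatio (hβ : 0 < β) :
    ContinuousOn (gadgetRatio α β) (Ioo 0 (2 * π / β)) :=
  ContinuousOn.div (by fun_prop) (by fun_prop) fun _ hs => (one_sub_cos_mul_pos hβ hs).ne'

lemma ordConnected_image_gadgetRatio (hβ : 0 < β) :
    (gadgetRatio α β '' Ioo 0 (2 * π / β)).OrdConnected :=
  isPreconnected_iff_ordConnected.mp (isPreconnected_Ioo.image _ (continuousOn_gadgetRatio hβ))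

lemma tendsto_gadgetRatio_atTop (hα : 0 < α) (hαβ : α < β) :
    Tendsto (gadgetRatio α β) (𝓝[<] (2 * π / β)) atTop := by
  have hβ : 0 < β := hα.trans hαβ
  set T := 2 * π / β with hT
  have hβT : β * T = 2 * π := by rw [hT]; field_simp
  have hnum : Tendsto (fun s => 1 - cos (α * s)) (𝓝[<] T) (𝓝 (1 - cos (α * T))) :=
    (Continuous.tendsto (by fun_prop) T).mono_left nhdsWithin_le_nhds
  have hnum_pos : 0 < 1 - cos (α * T) :=
    one_sub_cos_pos_of_pos_of_lt_two_pi (by positivity)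
      (hβT ▸ mul_lt_mul_of_pos_right hαβ (by positivity))
  have hden : Tendsto (fun s => 1 - cos (β * s)) (𝓝[<] T) (𝓝[>] 0) := by
    refine tendsto_nhdsWithin_iff.mpr ⟨?_, ?_⟩
    · have := (Continuous.tendsto (by fun_prop : Continuous fun s => 1 - cos (β * s)) T)
      rw [hβT, cos_two_pi, sub_self] at this
      exact this.mono_left nhdsWithin_le_nhds
    · filter_upwards [Ioo_mem_nhdsLT (by positivity : 0 < T)] with s hs
      exact one_sub_cos_mul_pos hβ hs
  unfold gadgetRatio
  simpa only [div_eq_mul_inv, Pi.inv_apply] using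
    hnum.pos_mul_atTop hnum_pos hden.inv_tendsto_nhdsGT_zero

lemma exists_gadgetRatio_lt_one_and_one_lt (hα : 0 < α) (hβ : 0 < β) (hαβ : α ≠ β) :
    (∃ s ∈ Ioo 0 (2 * π / β), gadgetRatio α β s < 1) ∧
      ∃ t ∈ Ioo 0 (2 * π / β), 1 < gadgetRatio α β t := by
  rcases hαβ.lt_or_gt with hlt | hgt
  · have hs : π / β ∈ Ioo 0 (2 * π / β) :=
      ⟨by positivity, div_lt_div_of_pos_right (by linarith [pi_pos]) hβ⟩
    have hcos : -1 < cos (α * (π / β)) := by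
      refine neg_one_lt_cos_of_nonneg_of_lt_pi (by positivity) ?_
      rw [mul_div_assoc', div_lt_iff₀ hβ, mul_comm π]
      exact mul_lt_mul_of_pos_right hlt pi_pos
    refine ⟨⟨π / β, hs, ?_⟩, ?_⟩
    · rw [gadgetRatio, mul_div_cancel₀ _ hβ.ne', cos_pi, div_lt_one (by norm_num)]
      linarith
    · obtain ⟨t, ht1, ht⟩ := ((tendsto_gadgetRatio_atTop hα hlt).eventually_gt_atTop 1).and
        (Ioo_mem_nhdsLT (by positivity : (0 : ℝ) < 2 * π / β)) |>.exists
      exact ⟨t, ht, ht1⟩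
  · have hT : 2 * π / α < 2 * π / β := div_lt_div_of_pos_left (by positivity) hβ hgt
    have hcos : -1 < cos (β * (π / α)) := by
      refine neg_one_lt_cos_of_nonneg_of_lt_pi (by positivity) ?_
      rw [mul_div_assoc', div_lt_iff₀ hα, mul_comm π]
      exact mul_lt_mul_of_pos_right hgt pi_pos
    have hden : 0 < 1 - cos (β * (π / α)) := by
      refine one_sub_cos_pos_of_pos_of_lt_two_pi (by positivity) ?_
      rw [mul_div_assoc', div_lt_iff₀ hα]
      nlinarith [pi_pos]
    refine ⟨⟨2 * π / α, ⟨by positivity, hT⟩, ?_⟩, ⟨π / α, ⟨by positivity, ?_⟩, ?_⟩⟩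
    · rw [gadgetRatio, mul_div_cancel₀ _ hα.ne', cos_two_pi, sub_self, zero_div]
      exact one_pos
    · exact (div_lt_div_of_pos_right (by linarith [pi_pos]) hα).trans hT
    · rw [gadgetRatio, mul_div_cancel₀ _ hα.ne', cos_pi, one_lt_div hden]
      linarith

end Positive

/-- Products of pairs of gadget ratios `r(s)·r(−s)` realize any prescribed
positive real number `c`. -/
theorem stmt_14 (a' : ℝ) (ha1 : a' ≠ 1) (ha2 : a' ≠ -1) (ha3 : a' ≠ -3) :
    ∀ c : ℝ, 0 < c →
      ∃ (k : ℕ) (s : Fin k → ℝ),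
        (∀ j : Fin k, Real.cos ((3 + a') * s j) ≠ 1) ∧
        (∏ j : Fin k,
          (1 - Real.cos ((1 - a') * s j)) / (1 - Real.cos ((3 + a') * s j))) = c := by
  intro c hc
  have hα : 0 < |1 - a'| := abs_pos.mpr (sub_ne_zero.mpr ha1.symm)
  have hβ : 0 < |3 + a'| := abs_pos.mpr fun h => ha3 (by linarith)
  have hαβ : |1 - a'| ≠ |3 + a'| := by
    rw [Ne, abs_eq_abs]
    rintro (h | h) <;> [exact ha2 (by linarith); linarith]
  obtain ⟨⟨s, hs, hs1⟩, t, ht, ht1⟩ := exists_gadgetRatio_lt_one_and_one_lt hα hβ hαβ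
  obtain ⟨k, _, ⟨u, hu, rfl⟩, hk⟩ := exists_pow_eq_of_ordConnected
    (ordConnected_image_gadgetRatio hβ) (mem_image_of_mem _ hs) (mem_image_of_mem _ ht) hs1 ht1 hc
  refine ⟨k, fun _ => u, fun _ => ?_, ?_⟩
  · have hcos := one_sub_cos_mul_pos hβ hu
    rw [← abs_of_pos hu.1, ← abs_mul, cos_abs] at hcos
    linarith
  · rw [Finset.prod_const, Finset.card_univ, Fintype.card_fin]
    rwa [gadgetRatio_abs_abs _ _ hu.1.le] at hk
end

section
/- Let α, β be nonzero complex numbers and let a' ∈ ℝ with a' ∉ {1, −1, −3}. For v ∈ ℝ define the 2×2 complex matrix g(v) = !![(a'+1)·exp(−2·i·v), (α/β)·(1−a')·exp(i·(1+a')·v); (β/α)·(3+a')·exp(−i·(1+a')·v), −(a'+1)·exp(−2·i·v)]. Then the smallest Lie subalgebra over ℝ of the Lie algebra of 2×2 complex matrices (with the commutator bracket) containing the set {g(v) : v ∈ ℝ, Real.sin(2·v) ≠ 0} is exactly the set of traceless 2×2 complex matrices sl(2,ℂ). -/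
/-!
With `k = a' + 1`, `ω = 1 + a'`, `X = c₁E + c₂F` and `Y = i(c₁E - c₂F)` one has
`g v = cos 2v • kH - sin 2v • k(iH) + cos ωv • X + sin ωv • Y`. The characters `v ↦ e^{iλv}`
are linearly independent and `2, -2, ω, -ω` are distinct, so a real functional vanishing on the
`g v` (for a dense set of `v`, hence by continuity for all `v`) vanishes on `H, iH, X, Y`: these
lie in the real span of the generators. Bracketing with `H` then produces `c₁E - c₂F` and `iX`,
hence all complex multiples of `H`, `c₁E` and `c₂F`, which span `sl(2,ℂ)` once `c₁c₂ ≠ 0`.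
-/

open Matrix

attribute [local instance 100] LieRing.ofAssociativeRing

section

open Complex

noncomputable def expMulIHom (r : ℝ) : Multiplicative ℝ →* ℂ where
  toFun v := exp (r * v.toAdd * I)
  map_one' := by simp
  map_mul' v w := by rw [← Complex.exp_add, toAdd_mul]; push_cast; ring_nf

theorem expMulIHom_injective : Function.Injective expMulIHom := by
  intro r s hrs
  by_contra hne
  -- at `v = π / (r - s)` the two characters differ by the factor `e^{iπ} = -1`
  have hv := DFunLike.congr_fun hrs (Multiplicative.ofAdd (Real.pi / (r - s)))
  have hsub : (r - s : ℂ) ≠ 0 := by exact_mod_cast sub_ne_zero.mpr hne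
  have : exp (r * ((Real.pi / (r - s) : ℝ) : ℂ) * I) =
      - exp (s * ((Real.pi / (r - s) : ℝ) : ℂ) * I) := by
    rw [← mul_neg_one, ← exp_pi_mul_I, ← exp_add]
    congr 1; push_cast; field_simp; ring
  simp only [expMulIHom, MonoidHom.coe_mk, OneHom.coe_mk, toAdd_ofAdd] at hv
  rw [hv, eq_neg_iff_add_eq_zero, ← two_mul] at this
  simp [exp_ne_zero] at this

theorem linearIndependent_exp_mul_I :
    LinearIndependent ℂ (fun (r v : ℝ) => exp (r * v * I)) :=
  (linearIndependent_monoidHom (Multiplicative ℝ) ℂ).comp _ expMulIHom_injective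

end

open Real in
theorem cos_sin_coeffs_eq_zero {l m : ℝ} (hl : l ≠ 0) (hm : m ≠ 0) (hlm : l ≠ m) (hlm' : l ≠ -m)
    {a b c d : ℝ}
    (h : ∀ v, a * cos (l * v) + b * sin (l * v) + c * cos (m * v) + d * sin (m * v) = 0) :
    a = 0 ∧ b = 0 ∧ c = 0 ∧ d = 0 := by
  have hinj : Function.Injective ![l, -l, m, -m] := by
    intro i j hij
    fin_cases i <;> fin_cases j <;> simp at hij ⊢ <;> grind
  have hcoeff := Fintype.linearIndependent_iff.mp (linearIndependent_exp_mul_I.comp _ hinj)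
    ![a - b * Complex.I, a + b * Complex.I, c - d * Complex.I, c + d * Complex.I] <| by
      funext v
      have hv := congrArg (fun x : ℝ => (2 * x : ℂ)) (h v)
      simp only [Complex.ofReal_add, Complex.ofReal_mul, Complex.ofReal_cos, Complex.ofReal_sin,
        Complex.cos, Complex.sin, neg_mul, Complex.ofReal_zero] at hv
      simp only [Finset.sum_apply, Pi.smul_apply, Function.comp_apply, Fin.sum_univ_four,
        smul_eq_mul, Matrix.cons_val, Complex.ofReal_neg, neg_mul, Pi.zero_apply]
      linear_combination hv
  obtain ⟨ha, hb⟩ : a = 0 ∧ b = 0 := by simpa [Complex.ext_iff] using hcoeff 0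
  obtain ⟨hc, hd⟩ : c = 0 ∧ d = 0 := by simpa [Complex.ext_iff] using hcoeff 2
  exact ⟨ha, hb, hc, hd⟩

theorem dense_setOf_sin_two_mul_ne_zero : Dense {v : ℝ | Real.sin (2 * v) ≠ 0} := by
  have hzeros : {v : ℝ | Real.sin (2 * v) = 0} ⊆ Set.range (fun n : ℤ => n * Real.pi / 2) := by
    intro v hv
    obtain ⟨n, hn⟩ := Real.sin_eq_zero_iff.mp hv
    exact ⟨n, by simp only; linarith⟩
  exact ((Set.countable_range _).mono hzeros).dense_compl ℝ

open Real in
theorem subset_span_image_of_eq_cos_sin {E : Type*} [AddCommGroup E] [Module ℝ E]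
    {l m : ℝ} (hl : l ≠ 0) (hm : m ≠ 0) (hlm : l ≠ m) (hlm' : l ≠ -m)
    {D : Set ℝ} (hD : Dense D) {f : ℝ → E} {p q r s : E}
    (hf : ∀ v, f v = cos (l * v) • p + sin (l * v) • q + cos (m * v) • r + sin (m * v) • s) :
    {p, q, r, s} ⊆ (Submodule.span ℝ (f '' D) : Set E) := by
  intro x hx
  by_contra hnot
  obtain ⟨φ, hφx, hφ⟩ := Submodule.exists_dual_map_eq_bot_of_notMem hnot inferInstance
  have hφf : ∀ v, φ (f v) =
      φ p * cos (l * v) + φ q * sin (l * v) + φ r * cos (m * v) + φ s * sin (m * v) := by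
    intro v
    simp only [hf, map_add, map_smul, smul_eq_mul]
    ring
  have hzero : (fun v => φ (f v)) = fun _ => 0 := by
    refine Continuous.ext_on hD ?_ continuous_const fun v hv => ?_
    · simp only [hφf]; fun_prop
    · rw [← Submodule.mem_bot ℝ, ← hφ]
      exact Submodule.mem_map_of_mem (Submodule.subset_span ⟨v, hv, rfl⟩)
  obtain ⟨hp, hq, hr, hs⟩ := cos_sin_coeffs_eq_zero hl hm hlm hlm' fun v =>
    (hφf v).symm.trans (congrFun hzero v)
  rcases hx with rfl | rfl | rfl | rfl <;> contradiction

section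

open Complex

theorem Submodule.smul_mem_of_mem_of_I_smul_mem {E : Type*} [AddCommGroup E] [Module ℂ E]
    [Module ℝ E] [IsScalarTower ℝ ℂ E] (p : Submodule ℝ E) {x : E} (hx : x ∈ p)
    (hIx : I • x ∈ p) (z : ℂ) : z • x ∈ p := by
  rw [← re_add_im z, add_smul, mul_smul, ← coe_algebraMap, algebraMap_smul, algebraMap_smul]
  exact add_mem (p.smul_mem _ hx) (p.smul_mem _ hIx)

def sl2H : Matrix (Fin 2) (Fin 2) ℂ := !![1, 0; 0, -1]
def sl2E (c : ℂ) : Matrix (Fin 2) (Fin 2) ℂ := !![0, c; 0, 0]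
def sl2F (c : ℂ) : Matrix (Fin 2) (Fin 2) ℂ := !![0, 0; c, 0]

theorem lie_sl2H_sl2E_add_sl2F (c₁ c₂ : ℂ) :
    ⁅sl2H, sl2E c₁ + sl2F c₂⁆ = (2 : ℝ) • (sl2E c₁ - sl2F c₂) := by
  ext i j
  fin_cases i <;> fin_cases j <;> simp [Ring.lie_def, sl2H, sl2E, sl2F, real_smul] <;> ring

theorem lie_sl2H_sl2E_sub_sl2F (c₁ c₂ : ℂ) :
    ⁅sl2H, sl2E c₁ - sl2F c₂⁆ = (2 : ℝ) • (sl2E c₁ + sl2F c₂) := by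
  ext i j
  fin_cases i <;> fin_cases j <;> simp [Ring.lie_def, sl2H, sl2E, sl2F, real_smul] <;> ring

theorem eq_smul_sl2H_add_smul_sl2E_add_smul_sl2F {A : Matrix (Fin 2) (Fin 2) ℂ} (hA : A.trace = 0)
    {c₁ c₂ : ℂ} (hc₁ : c₁ ≠ 0) (hc₂ : c₂ ≠ 0) :
    A = A 0 0 • sl2H + (A 0 1 / c₁) • sl2E c₁ + (A 1 0 / c₂) • sl2F c₂ := by
  have h11 : A 1 1 = -A 0 0 := by linear_combination (trace_fin_two A).symm.trans hA
  ext i j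
  fin_cases i <;> fin_cases j <;> simp [sl2H, sl2E, sl2F, hc₁, hc₂, h11]

noncomputable def slReal (n : Type*) [Fintype n] [DecidableEq n] :
    LieSubalgebra ℝ (Matrix n n ℂ) where
  __ := LinearMap.ker ((Matrix.traceLinearMap n ℂ ℂ).restrictScalars ℝ)
  lie_mem' := fun _ _ => LinearMap.mem_ker.2 (LieAlgebra.matrix_trace_commutator_zero _ _ _ _)

theorem slReal_le {S : LieSubalgebra ℝ (Matrix (Fin 2) (Fin 2) ℂ)} {c₁ c₂ : ℂ}
    (hc₁ : c₁ ≠ 0) (hc₂ : c₂ ≠ 0) (hH : sl2H ∈ S) (hIH : I • sl2H ∈ S)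
    (hX : sl2E c₁ + sl2F c₂ ∈ S) (hY : I • (sl2E c₁ - sl2F c₂) ∈ S) :
    slReal (Fin 2) ≤ S := by
  have h2 : (2 : ℝ) ≠ 0 := two_ne_zero
  have hX' : sl2E c₁ - sl2F c₂ ∈ S := (S.toSubmodule.smul_mem_iff h2).mp <| by
    rw [← lie_sl2H_sl2E_add_sl2F]
    exact S.lie_mem hH hX
  have hIX : I • (sl2E c₁ + sl2F c₂) ∈ S := (S.toSubmodule.smul_mem_iff h2).mp <| by
    rw [smul_comm, ← lie_sl2H_sl2E_sub_sl2F, ← lie_smul]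
    exact S.lie_mem hH hY
  have hℂ {x} (hx : x ∈ S) (hIx : I • x ∈ S) (z : ℂ) : z • x ∈ S :=
    S.toSubmodule.smul_mem_of_mem_of_I_smul_mem hx hIx z
  have hE (z : ℂ) : z • sl2E c₁ ∈ S := by
    convert S.smul_mem (2 : ℝ)⁻¹ (S.add_mem (hℂ hX hIX z) (hℂ hX' hY z)) using 1
    module
  have hF (z : ℂ) : z • sl2F c₂ ∈ S := by
    convert S.smul_mem (2 : ℝ)⁻¹ (S.sub_mem (hℂ hX hIX z) (hℂ hX' hY z)) using 1
    module
  intro A hA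
  rw [eq_smul_sl2H_add_smul_sl2E_add_smul_sl2F hA hc₁ hc₂]
  exact add_mem (add_mem (hℂ hH hIH _) (hE _)) (hF _)

theorem exp_matrix_eq_cos_sin (k ω : ℝ) (c₁ c₂ : ℂ) (v : ℝ) :
    !![k * exp (-(2 * I * v)), c₁ * exp (I * ω * v);
        c₂ * exp (-(I * ω * v)), -(k * exp (-(2 * I * v)))] =
      Real.cos (2 * v) • (k • sl2H) + Real.sin (2 * v) • (-k • (I • sl2H)) +
        Real.cos (ω * v) • (sl2E c₁ + sl2F c₂) + Real.sin (ω * v) • (I • (sl2E c₁ - sl2F c₂)) := by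
  have h2 : exp (-(2 * I * v)) = Real.cos (2 * v) - Real.sin (2 * v) * I := by
    rw [show -(2 * I * v) = -(2 * v : ℂ) * I by ring, exp_mul_I, cos_neg, sin_neg]
    push_cast; ring
  have hω : exp (I * ω * v) = Real.cos (ω * v) + Real.sin (ω * v) * I := by
    rw [show I * ω * v = (ω * v : ℂ) * I by ring, exp_mul_I]
    push_cast; ring
  have hω' : exp (-(I * ω * v)) = Real.cos (ω * v) - Real.sin (ω * v) * I := by
    rw [show -(I * ω * v) = -(ω * v : ℂ) * I by ring, exp_mul_I, cos_neg, sin_neg]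
    push_cast; ring
  rw [h2, hω, hω']
  ext i j
  fin_cases i <;> fin_cases j <;> simp [sl2H, sl2E, sl2F, real_smul] <;> ring

end

/-- The tangent matrices `g(v)` of the postselection gadgets generate, as a real
Lie algebra, all of `sl(2,ℂ)` when `a' ∉ {1, −1, −3}`. -/
theorem stmt_16 (α β : ℂ) (hα : α ≠ 0) (hβ : β ≠ 0)
    (a' : ℝ) (ha1 : a' ≠ 1) (ha2 : a' ≠ -1) (ha3 : a' ≠ -3)
    (g : ℝ → Matrix (Fin 2) (Fin 2) ℂ)
    (hg : ∀ v : ℝ, g v =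
      !![((a' : ℂ) + 1) * Complex.exp (-(2 * Complex.I * (v : ℂ))),
          (α / β) * (1 - (a' : ℂ)) * Complex.exp (Complex.I * (1 + (a' : ℂ)) * (v : ℂ));
          (β / α) * (3 + (a' : ℂ)) * Complex.exp (-(Complex.I * (1 + (a' : ℂ)) * (v : ℂ))),
          -(((a' : ℂ) + 1) * Complex.exp (-(2 * Complex.I * (v : ℂ))))]) :
    (LieSubalgebra.lieSpan ℝ (Matrix (Fin 2) (Fin 2) ℂ)
        {A | ∃ v : ℝ, Real.sin (2 * v) ≠ 0 ∧ A = g v} :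
        Set (Matrix (Fin 2) (Fin 2) ℂ)) =
      {A : Matrix (Fin 2) (Fin 2) ℂ | A.trace = 0} := by
  set c₁ := α / β * (1 - (a' : ℂ))
  set c₂ := β / α * (3 + (a' : ℂ))
  set S := LieSubalgebra.lieSpan ℝ (Matrix (Fin 2) (Fin 2) ℂ)
    {A | ∃ v : ℝ, Real.sin (2 * v) ≠ 0 ∧ A = g v}
  have hk : a' + 1 ≠ 0 := by contrapose! ha2; linarith
  have hc₁ : c₁ ≠ 0 :=
    mul_ne_zero (div_ne_zero hα hβ) (by exact_mod_cast sub_ne_zero.mpr ha1.symm)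
  have hc₂ : c₂ ≠ 0 := mul_ne_zero (div_ne_zero hβ hα) (by
    have : 3 + a' ≠ 0 := by contrapose! ha3; linarith
    exact_mod_cast this)
  have hg' v : g v = _ :=
    (hg v).trans (by exact_mod_cast exp_matrix_eq_cos_sin (a' + 1) (1 + a') c₁ c₂ v)
  have hgen := subset_span_image_of_eq_cos_sin two_ne_zero (by contrapose! ha2; linarith)
    (by contrapose! ha1; linarith) (by contrapose! ha3; linarith)
    dense_setOf_sin_two_mul_ne_zero hg'
  have hgenS : _ ⊆ (S : Set (Matrix (Fin 2) (Fin 2) ℂ)) := hgen.trans <|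
    (Submodule.span_mono (by rintro _ ⟨v, hv, rfl⟩; exact ⟨v, hv, rfl⟩)).trans
      LieSubalgebra.submodule_span_le_lieSpan
  have hH : sl2H ∈ S := (S.toSubmodule.smul_mem_iff hk).mp (hgenS (by simp))
  have hIH : Complex.I • sl2H ∈ S :=
    (S.toSubmodule.smul_mem_iff (neg_ne_zero.mpr hk)).mp (hgenS (by simp))
  refine Set.Subset.antisymm ?_ fun A hA =>
    slReal_le hc₁ hc₂ hH hIH (hgenS (by simp)) (hgenS (by simp)) hA
  refine (LieSubalgebra.lieSpan_le (K := slReal (Fin 2))).mpr ?_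
  rintro _ ⟨v, -, rfl⟩
  simp [slReal, hg, trace_fin_two]
end

section
/- Let α, β be nonzero complex numbers and let a' ∈ ℝ with a' ∉ {0, −1}. For θ ∈ ℝ define the 2×2 complex matrices g(θ) = !![−a'·Complex.I, −(α/β)·a'·exp(i·θ); (β/α)·(2+a')·exp(−i·θ), a'·Complex.I] and h(θ) = !![−(a'+1)·Complex.I, (α/β)·(1−a')·exp(i·θ); (β/α)·(1+a')·exp(−i·θ), (a'+1)·Complex.I]. Then the smallest Lie subalgebra over ℝ of the Lie algebra of 2×2 complex matrices (with the commutator bracket) containing the set {g(θ) : θ ∈ ℝ} ∪ {h(θ) : θ ∈ ℝ} is exactly the set of traceless 2×2 complex matrices sl(2,ℂ). -/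
open Matrix Complex

attribute [local instance] LieRing.ofAssociativeRing

/-! Write `g θ` and `h θ` as real combinations of `D = diag(i, -i)`, `U θ = (α/β) e^{iθ} E`
and `L θ = (β/α) e^{-iθ} F`. As `U` and `L` change sign under `θ ↦ θ + π`, the sums
`g 0 + g π` and `h 0 + h π` are `-2a' D` and `-2(a'+1) D`, whose difference is `2D`. The
coefficients of `U θ, L θ` in `g θ + a' D` and `h θ + (a'+1) D` form a matrix of determinant
`-2`, so `U θ` and `L θ` lie in the span for every `θ`; `θ = 0, π/2` then give all of `ℂ E`
and `ℂ F`, and `[E, F] = H` together with `i H = D` gives the diagonal. -/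

section RealSubspaces

variable {S M : Type*} [AddCommGroup M] [SetLike S M] {s : S}

theorem smul_mem_of_mem_of_I_smul_mem [Module ℂ M] [Module ℝ M] [IsScalarTower ℝ ℂ M]
    [AddSubmonoidClass S M] [SMulMemClass S ℝ M] {x : M} (hx : x ∈ s) (hIx : I • x ∈ s)
    (z : ℂ) : z • x ∈ s := by
  have ofReal_smul (r : ℝ) (y : M) : (r : ℂ) • y = r • y := algebraMap_smul ℂ r y
  rw [← re_add_im z, add_smul, mul_smul, ofReal_smul, ofReal_smul]
  exact add_mem (SMulMemClass.smul_mem _ hx) (SMulMemClass.smul_mem _ hIx)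

theorem smul_mem_of_forall_exp_smul_mem [Module ℂ M] [Module ℝ M] [IsScalarTower ℝ ℂ M]
    [AddSubmonoidClass S M] [SMulMemClass S ℝ M] {x : M} {c : ℂ} (hc : c ≠ 0)
    (h : ∀ θ : ℝ, (c * exp (I * θ)) • x ∈ s) (z : ℂ) : z • x ∈ s := by
  have h0 : c • x ∈ s := by simpa using h 0
  have h1 : I • c • x ∈ s := by
    have := h (Real.pi / 2)
    rwa [ofReal_div, ofReal_ofNat, mul_comm I, exp_pi_div_two_mul_I, mul_comm, mul_smul]
      at this
  have := smul_mem_of_mem_of_I_smul_mem h0 h1 (z / c)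
  rwa [smul_smul, div_mul_cancel₀ z hc] at this

theorem mem_and_mem_of_smul_add_smul_mem {K : Type*} [Field K] [Module K M]
    [AddSubgroupClass S M] [SMulMemClass S K M] {u v : M} {p q r t : K}
    (hdet : p * t - q * r ≠ 0) (hx : p • u + q • v ∈ s) (hy : r • u + t • v ∈ s) :
    u ∈ s ∧ v ∈ s := by
  have hcomb (a b : K) : a • (p • u + q • v) + b • (r • u + t • v) ∈ s :=
    add_mem (SMulMemClass.smul_mem a hx) (SMulMemClass.smul_mem b hy)
  generalize hd : p * t - q * r = d at hdet
  constructor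
  · convert hcomb (t / d) (-q / d) using 1
    match_scalars <;> field_simp <;> subst hd <;> ring
  · convert hcomb (-r / d) (p / d) using 1
    match_scalars <;> field_simp <;> subst hd <;> ring

theorem mem_of_tangent_combinations_mem [Module ℝ M] [AddSubgroupClass S M]
    [SMulMemClass S ℝ M] (a : ℝ) {D : M} {U L : ℝ → M} (hU : U Real.pi = -U 0)
    (hL : L Real.pi = -L 0)
    (hg : ∀ θ, (-a) • D + (-a) • U θ + (2 + a) • L θ ∈ s)
    (hh : ∀ θ, (-(a + 1)) • D + (1 - a) • U θ + (1 + a) • L θ ∈ s) :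
    D ∈ s ∧ ∀ θ, U θ ∈ s ∧ L θ ∈ s := by
  have hD : D ∈ s := by
    have hsum := sub_mem (add_mem (hg 0) (hg Real.pi)) (add_mem (hh 0) (hh Real.pi))
    rw [hU, hL] at hsum
    convert SMulMemClass.smul_mem (2 : ℝ)⁻¹ hsum using 1
    module
  refine ⟨hD, fun θ ↦ mem_and_mem_of_smul_add_smul_mem (p := -a) (q := 2 + a) (r := 1 - a)
    (t := 1 + a) (by ring_nf; norm_num) ?_ ?_⟩
  · convert add_mem (hg θ) (SMulMemClass.smul_mem a hD) using 1
    module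
  · convert add_mem (hh θ) (SMulMemClass.smul_mem (a + 1) hD) using 1
    module

end RealSubspaces

def tracelessLieSubalgebra (R A n : Type*) [CommRing R] [CommRing A] [Algebra R A] [Fintype n]
    [DecidableEq n] : LieSubalgebra R (Matrix n n A) where
  carrier := {X | X.trace = 0}
  add_mem' hX hY := by simp_all [trace_add]
  zero_mem' := trace_zero n A
  smul_mem' r X hX := by simp_all [trace_smul]
  lie_mem' {X Y} _ _ := by simp [Ring.lie_def, trace_sub, trace_mul_comm X Y]

@[simp]
theorem mem_tracelessLieSubalgebra {R A n : Type*} [CommRing R] [CommRing A] [Algebra R A]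
    [Fintype n] [DecidableEq n] {X : Matrix n n A} :
    X ∈ tracelessLieSubalgebra R A n ↔ X.trace = 0 :=
  Iff.rfl

theorem tracelessLieSubalgebra_le_of_mem {S : LieSubalgebra ℝ (Matrix (Fin 2) (Fin 2) ℂ)}
    (hE : ∀ z : ℂ, z • !![0, 1; 0, 0] ∈ S) (hF : ∀ z : ℂ, z • !![0, 0; 1, 0] ∈ S)
    (hD : !![I, 0; 0, -I] ∈ S) : tracelessLieSubalgebra ℝ ℂ (Fin 2) ≤ S := by
  intro X hX
  have hH : !![1, 0; 0, -1] ∈ S := by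
    convert S.lie_mem (hE 1) (hF 1) using 1
    rw [one_smul, one_smul, Ring.lie_def, mul_fin_two, mul_fin_two]
    simp
  have hX : X = (X 0 0).re • !![1, 0; 0, -1] + (X 0 0).im • !![I, 0; 0, -I]
      + X 0 1 • !![0, 1; 0, 0] + X 1 0 • !![0, 0; 1, 0] := by
    have h11 : X 1 1 = -X 0 0 := eq_neg_of_add_eq_zero_right (trace_fin_two X ▸ hX)
    ext i j
    fin_cases i <;> fin_cases j <;> simp [h11, Complex.ext_iff]
  rw [hX]
  exact add_mem (add_mem (add_mem (S.smul_mem _ hH) (S.smul_mem _ hD)) (hE _)) (hF _)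

theorem stmt_17_general (α β : ℂ) (hα : α ≠ 0) (hβ : β ≠ 0)
    (a' : ℝ)
    (g h : ℝ → Matrix (Fin 2) (Fin 2) ℂ)
    (hg : ∀ θ : ℝ, g θ =
      !![-((a' : ℂ) * Complex.I),
          -((α / β) * (a' : ℂ) * Complex.exp (Complex.I * (θ : ℂ)));
          (β / α) * (2 + (a' : ℂ)) * Complex.exp (-(Complex.I * (θ : ℂ))),
          (a' : ℂ) * Complex.I])
    (hh : ∀ θ : ℝ, h θ =
      !![-(((a' : ℂ) + 1) * Complex.I),
          (α / β) * (1 - (a' : ℂ)) * Complex.exp (Complex.I * (θ : ℂ));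
          (β / α) * (1 + (a' : ℂ)) * Complex.exp (-(Complex.I * (θ : ℂ))),
          ((a' : ℂ) + 1) * Complex.I]) :
    (LieSubalgebra.lieSpan ℝ (Matrix (Fin 2) (Fin 2) ℂ)
        ({A | ∃ θ : ℝ, A = g θ} ∪ {A | ∃ θ : ℝ, A = h θ}) :
        Set (Matrix (Fin 2) (Fin 2) ℂ)) =
      {A : Matrix (Fin 2) (Fin 2) ℂ | A.trace = 0} := by
  set S := LieSubalgebra.lieSpan ℝ (Matrix (Fin 2) (Fin 2) ℂ)
    ({A | ∃ θ : ℝ, A = g θ} ∪ {A | ∃ θ : ℝ, A = h θ})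
  set D : Matrix (Fin 2) (Fin 2) ℂ := !![I, 0; 0, -I]
  set U : ℝ → Matrix (Fin 2) (Fin 2) ℂ :=
    fun θ ↦ (α / β * exp (I * θ)) • !![0, 1; 0, 0]
  set L : ℝ → Matrix (Fin 2) (Fin 2) ℂ :=
    fun θ ↦ (β / α * exp (-(I * θ))) • !![0, 0; 1, 0]
  have hgS (θ : ℝ) : (-a') • D + (-a') • U θ + (2 + a') • L θ ∈ S := by
    have hgθ : g θ ∈ S := LieSubalgebra.subset_lieSpan (Or.inl ⟨θ, rfl⟩)
    convert hgθ using 1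
    rw [hg]; ext i j; fin_cases i <;> fin_cases j <;> simp [D, U, L] <;> ring
  have hhS (θ : ℝ) : (-(a' + 1)) • D + (1 - a') • U θ + (1 + a') • L θ ∈ S := by
    have hhθ : h θ ∈ S := LieSubalgebra.subset_lieSpan (Or.inr ⟨θ, rfl⟩)
    convert hhθ using 1
    rw [hh]; ext i j; fin_cases i <;> fin_cases j <;> simp [D, U, L] <;> ring
  have hU : U Real.pi = -U 0 := by simp [U, mul_comm I, exp_pi_mul_I]
  have hL : L Real.pi = -L 0 := by simp [L, mul_comm I, exp_neg, exp_pi_mul_I]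
  obtain ⟨hD, hUL⟩ := mem_of_tangent_combinations_mem a' hU hL hgS hhS
  have hE : ∀ z : ℂ, z • !![0, 1; 0, 0] ∈ S :=
    smul_mem_of_forall_exp_smul_mem (div_ne_zero hα hβ) fun θ ↦ (hUL θ).1
  have hF : ∀ z : ℂ, z • !![0, 0; 1, 0] ∈ S :=
    smul_mem_of_forall_exp_smul_mem (div_ne_zero hβ hα) fun θ ↦ by
      simpa [L] using (hUL (-θ)).2
  refine congrArg SetLike.coe (le_antisymm ?_ (tracelessLieSubalgebra_le_of_mem hE hF hD))
  refine LieSubalgebra.lieSpan_le.mpr ?_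
  rintro _ (⟨θ, rfl⟩ | ⟨θ, rfl⟩) <;> simp [hg, hh, trace_fin_two_of]

/-- In the two-parameter case (`H ≠ THT`, `d' = −1 − a'`), the tangent matrices
`g(θ)` and `h(θ)` generate, as a real Lie algebra, all of `sl(2,ℂ)`
when `a' ∉ {0, −1}`. -/
theorem stmt_17 (α β : ℂ) (hα : α ≠ 0) (hβ : β ≠ 0)
    (a' : ℝ) (ha0 : a' ≠ 0) (ha1 : a' ≠ -1)
    (g h : ℝ → Matrix (Fin 2) (Fin 2) ℂ)
    (hg : ∀ θ : ℝ, g θ =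
      !![-((a' : ℂ) * Complex.I),
          -((α / β) * (a' : ℂ) * Complex.exp (Complex.I * (θ : ℂ)));
          (β / α) * (2 + (a' : ℂ)) * Complex.exp (-(Complex.I * (θ : ℂ))),
          (a' : ℂ) * Complex.I])
    (hh : ∀ θ : ℝ, h θ =
      !![-(((a' : ℂ) + 1) * Complex.I),
          (α / β) * (1 - (a' : ℂ)) * Complex.exp (Complex.I * (θ : ℂ));
          (β / α) * (1 + (a' : ℂ)) * Complex.exp (-(Complex.I * (θ : ℂ))),
          ((a' : ℂ) + 1) * Complex.I]) :
    (LieSubalgebra.lieSpan ℝ (Matrix (Fin 2) (Fin 2) ℂ)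
        ({A | ∃ θ : ℝ, A = g θ} ∪ {A | ∃ θ : ℝ, A = h θ}) :
        Set (Matrix (Fin 2) (Fin 2) ℂ)) =
      {A : Matrix (Fin 2) (Fin 2) ℂ | A.trace = 0} :=
  stmt_17_general α β hα hβ a' g h hg hh
end

section
/- The image under the matrix exponential of the set of traceless 2×2 complex matrices is dense in SL(2,ℂ): for every M : Matrix (Fin 2) (Fin 2) ℂ with det M = 1 and every ε > 0, there exists A : Matrix (Fin 2) (Fin 2) ℂ with A.trace = 0 such that ‖exp(A) − M‖ < ε. -/
/-!
Every `M ∈ SL(2,ℂ)` is conjugate to an upper triangular matrix `!![λ, β; 0, λ⁻¹]`. When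
`λ ≠ λ⁻¹` this matrix is diagonalisable, so it is the exponential of a conjugate of the traceless
matrix `diag(log λ, -log λ)`. The exceptional eigenvalues `λ = ±1` (where e.g. `!![-1, 1; 0, -1]`
is not the exponential of a traceless matrix) are reached as limits as `λ` varies, and the closure of the set of
exponentials of traceless matrices is stable under conjugation.
-/

open Matrix

attribute [local instance] Matrix.normedAddCommGroup

lemma eq_conj_of_mul_eq {n R : Type*} [Fintype n] [DecidableEq n] [CommRing R]
    {M P T : Matrix n n R} (hP : IsUnit P.det) (h : M * P = P * T) : M = P * T * P⁻¹ := by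
  rw [← h, mul_nonsing_inv_cancel_right P M hP]

lemma exists_eq_conj_upperTriangular {K : Type*} [Field K] [IsAlgClosed K]
    (M : Matrix (Fin 2) (Fin 2) K) :
    ∃ P : Matrix (Fin 2) (Fin 2) K, IsUnit P.det ∧ ∃ l β μ : K, M = P * !![l, β; 0, μ] * P⁻¹ := by
  obtain ⟨a, b, c, d, rfl⟩ : ∃ a b c d : K, M = !![a, b; c, d] := ⟨_, _, _, _, eta_fin_two M⟩
  by_cases hc : c = 0
  · exact ⟨1, by simp, a, b, d, by simp [hc]⟩
  obtain ⟨l, hl⟩ := IsAlgClosed.exists_root !![a, b; c, d].charpoly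
    (by simp [charpoly_degree_eq_dim])
  have hl : l ^ 2 - (a + d) * l + (a * d - b * c) = 0 := by simpa [charpoly_fin_two] using hl
  -- `(l - d, c)` is an eigenvector for `l`; it is nonzero because `c ≠ 0`.
  have hP : IsUnit !![l - d, 1; c, 0].det := by simpa using hc
  refine ⟨_, hP, l, 1, a + d - l, eq_conj_of_mul_eq hP ?_⟩
  have eigen : a * (l - d) + b * c = (l - d) * l := by linear_combination -hl
  rw [mul_fin_two, mul_fin_two, eigen]
  ring_nf

lemma upperTriangular_eq_conj_diagonal {K : Type*} [Field K] {l μ : K} (h : l ≠ μ) (β : K) :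
    !![l, β; 0, μ] = !![1, β; 0, μ - l] * !![l, 0; 0, μ] * !![1, β; 0, μ - l]⁻¹ :=
  eq_conj_of_mul_eq (by simpa [sub_eq_zero] using h.symm)
    (by rw [mul_fin_two, mul_fin_two]; ring_nf)

def expTraceless (n : Type*) [Fintype n] [DecidableEq n] : Set (Matrix n n ℂ) :=
  NormedSpace.exp '' {A | A.trace = 0}

section Conj

variable {n : Type*} [Fintype n] [DecidableEq n]

lemma conj_mem_expTraceless {P X : Matrix n n ℂ} (hP : IsUnit P.det)
    (hX : X ∈ expTraceless n) : P * X * P⁻¹ ∈ expTraceless n := by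
  obtain ⟨A, hA, rfl⟩ := hX
  refine ⟨P * A * P⁻¹, ?_, exp_conj P A ((isUnit_iff_isUnit_det P).2 hP)⟩
  rw [Set.mem_ofPred_eq, trace_mul_cycle, nonsing_inv_mul P hP, one_mul, hA]

lemma conj_mem_closure_expTraceless {P X : Matrix n n ℂ} (hP : IsUnit P.det)
    (hX : X ∈ closure (expTraceless n)) : P * X * P⁻¹ ∈ closure (expTraceless n) :=
  map_mem_closure (f := fun X ↦ P * X * P⁻¹)
    ((continuous_const.matrix_mul continuous_id).matrix_mul continuous_const) hX
    fun _ ↦ conj_mem_expTraceless hP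

end Conj

lemma diagonal_mem_expTraceless {l : ℂ} (hl : l ≠ 0) :
    !![l, 0; 0, l⁻¹] ∈ expTraceless (Fin 2) := by
  refine ⟨diagonal ![Complex.log l, -Complex.log l], by simp [Fin.sum_univ_two], ?_⟩
  rw [exp_diagonal, Pi.exp_def]
  ext i j
  fin_cases i <;> fin_cases j <;>
    simp [← Complex.exp_eq_exp_ℂ, Complex.exp_neg, Complex.exp_log hl]

lemma upperTriangular_mem_expTraceless {l : ℂ} (hl : l ≠ 0) (hl' : l ≠ l⁻¹) (β : ℂ) :
    !![l, β; 0, l⁻¹] ∈ expTraceless (Fin 2) := by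
  rw [upperTriangular_eq_conj_diagonal hl' β]
  exact conj_mem_expTraceless (by simpa [sub_eq_zero] using hl'.symm)
    (diagonal_mem_expTraceless hl)

lemma upperTriangular_mem_closure_expTraceless {l : ℂ} (hl : l ≠ 0) (β : ℂ) :
    !![l, β; 0, l⁻¹] ∈ closure (expTraceless (Fin 2)) := by
  have hcont : ContinuousAt (fun x : ℂ ↦ !![x, β; 0, x⁻¹]) l := by fun_prop (disch := assumption)
  refine mem_closure_of_tendsto (hcont.tendsto.mono_left (nhdsWithin_le_nhds (s := {l}ᶜ))) ?_
  filter_upwards [nhdsNE_le_cofinite l (Set.toFinite {0, 1, -1}).eventually_cofinite_notMem]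
    with x hx
  simp only [Set.mem_insert_iff, Set.mem_singleton_iff, not_or] at hx
  refine upperTriangular_mem_expTraceless hx.1 (fun h ↦ ?_) β
  have hsq : x * x = 1 := by nth_rw 2 [h]; exact mul_inv_cancel₀ hx.1
  exact (mul_self_eq_one_iff.1 hsq).elim hx.2.1 hx.2.2

/-- The image of `sl(2,ℂ)` under the matrix exponential is dense in `SL(2,ℂ)`. -/
theorem stmt_19 (M : Matrix (Fin 2) (Fin 2) ℂ) (hM : M.det = 1) :
    ∀ ε : ℝ, 0 < ε →
      ∃ A : Matrix (Fin 2) (Fin 2) ℂ, A.trace = 0 ∧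
        ‖NormedSpace.exp A - M‖ < ε := by
  intro ε hε
  obtain ⟨P, hP, l, β, μ, rfl⟩ := exists_eq_conj_upperTriangular M
  have hlμ : l * μ = 1 := by simpa [det_conj ((isUnit_iff_isUnit_det P).2 hP)] using hM
  obtain rfl : μ = l⁻¹ := eq_inv_of_mul_eq_one_right hlμ
  have hmem := conj_mem_closure_expTraceless hP
    (upperTriangular_mem_closure_expTraceless (left_ne_zero_of_mul_eq_one hlμ) β)
  obtain ⟨_, ⟨A, hA, rfl⟩, hdist⟩ := Metric.mem_closure_iff.1 hmem ε hε
  exact ⟨A, hA, by rwa [dist_comm, dist_eq_norm] at hdist⟩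
end
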